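/- arXiv:2209.10757 — 5 statements merged into one kernel-verified Lean document; each statement's English description precedes it below -/
import Mathlib

section
/- Every graded map f : ℚ → ℤ is equal to f_d, to f_d^{(1)}, or to f_d^{(-1)} for some real number d. -/
open scoped Pointwise

variable {K : Type*} [DivisionRing K]

/-- `V` is a total valuation ring of the division ring `K`. -/
def IsTVR (V : Subring K) : Prop := ∀ k : K, k ≠ 0 → k ∈ V ∨ k⁻¹ ∈ V

/-- The additive group generated by the elementwise products of two subsets, as a set. -/
def aprod (S T : Set K) : Set K := (AddSubgroup.closure (S * T) : Set K)

/-- `O_l(S) = {a ∈ K : aS ⊆ S}`. -/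
def Ol (S : Set K) : Set K := {a : K | ∀ x ∈ S, a * x ∈ S}

/-- `O_r(S) = {a ∈ K : Sa ⊆ S}`. -/
def Orr (S : Set K) : Set K := {a : K | ∀ x ∈ S, x * a ∈ S}

/-- `(J : I)_r = {a ∈ K : Ia ⊆ J}`. -/
def residR (J I : Set K) : Set K := {a : K | ∀ x ∈ I, x * a ∈ J}

/-- The Jacobson radical of a total valuation ring `W`, as a set:
`{x ∈ W : x = 0 ∨ x⁻¹ ∉ W}`. -/
def jacS (W : Set K) : Set K := {x : K | x ∈ W ∧ (x = 0 ∨ x⁻¹ ∉ W)}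

/-- `S⁻ = {c⁻¹ : 0 ≠ c ∈ S}`. -/
def invS (S : Set K) : Set K := {x : K | ∃ c ∈ S, c ≠ 0 ∧ x = c⁻¹}

/-- `S` is an additive subgroup of `K`. -/
def IsAddSubgrp (S : Set K) : Prop := (0 : K) ∈ S ∧ ∀ x ∈ S, ∀ y ∈ S, x - y ∈ S

/-- `*I = ⋂ {Wc : c ∈ K, I ⊆ Wc}` where `W = O_l(I)`. -/
def lstar (I : Set K) : Set K := ⋂ c ∈ {c : K | I ⊆ Ol I * {c}}, Ol I * {c}

/-- A family `(A_r)` of additive subgroups of `K` is a graded extension of `V0`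
with support the additive subgroup `H ⊆ ℚ`. -/
def IsGradedExtOn (H : Set ℚ) (V0 : Set K) (σ : ℚ → (K ≃+* K)) (A : ℚ → Set K) : Prop :=
  (∀ r ∈ H, IsAddSubgrp (A r)) ∧ A 0 = V0 ∧
  (∀ r ∈ H, A r ∪ (σ r '' invS (A (-r))) = Set.univ) ∧
  (∀ r ∈ H, ∀ s ∈ H, aprod (A r) (σ r '' A s) ⊆ A (r + s))

/-- `ℤr = {ir : i ∈ ℤ}` as a subset of `ℚ`. -/
def zmulSet (r : ℚ) : Set ℚ := {s : ℚ | ∃ i : ℤ, s = (i : ℚ) * r}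

/-- Graded extension of `V0` in `K[ℚ,σ]`. -/
def IsGradedExtQ (V0 : Set K) (σ : ℚ → (K ≃+* K)) (A : ℚ → Set K) : Prop :=
  IsGradedExtOn Set.univ V0 σ A

/-- `H_r` is a graded extension of `V0` in `K[X^r, X^{-r}; σ(r)]`. -/
def IsGradedExtHr (V0 : Set K) (σ : ℚ → (K ≃+* K)) (A : ℚ → Set K) (r : ℚ) : Prop :=
  IsGradedExtOn (zmulSet r) V0 σ A

/-- `H_r` is of Type (I). -/
def HrTypeI (σ : ℚ → (K ≃+* K)) (A : ℚ → Set K) (r : ℚ) : Prop :=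
  ∀ i j : ℤ, 0 < i → 0 < j →
    aprod (A ((i : ℚ) * r)) (σ ((i : ℚ) * r) '' A ((j : ℚ) * r)) = A (((i + j : ℤ) : ℚ) * r) ∧
    aprod (A (-((i : ℚ) * r))) (σ (-((i : ℚ) * r)) '' A (-((j : ℚ) * r)))
      = A (-(((i + j : ℤ) : ℚ) * r))

/-- The whole family `(A_r)_{r ∈ ℚ}` is of Type (I). -/
def FamTypeI (σ : ℚ → (K ≃+* K)) (A : ℚ → Set K) : Prop :=
  ∀ g h : ℚ, 0 < g → 0 < h →
    aprod (A g) (σ g '' A h) = A (g + h) ∧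
    aprod (A (-g)) (σ (-g) '' A (-h)) = A (-g - h)

/-- `M_0 = V`, `M_{ir} = A_r A_r^{σ(r)} ⋯ A_r^{σ((i-1)r)}`. -/
def Mir (V0 : Set K) (σ : ℚ → (K ≃+* K)) (A : ℚ → Set K) (r : ℚ) : ℕ → Set K
  | 0 => V0
  | 1 => A r
  | n + 2 => aprod (Mir V0 σ A r (n + 1)) (σ (((n + 1 : ℕ) : ℚ) * r) '' A r)

/-- `H_r` is of Type (a). -/
def HrTypeA (V0 : Set K) (σ : ℚ → (K ≃+* K)) (A : ℚ → Set K) (r : ℚ) : Prop :=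
  ∃ a : K, A r = V0 * {a} ∧ A r = {a} * (σ r '' V0) ∧ A (-r) = V0 * {σ (-r) a⁻¹}

/-- `H_r` is of Type (b). -/
def HrTypeB (σ : ℚ → (K ≃+* K)) (A : ℚ → Set K) (r : ℚ) : Prop :=
  ∃ a : K, A r = Ol (A r) * {a} ∧ {a} * (σ r '' Ol (A r)) ⊂ A r

/-- `H_r` is of Type (c). -/
def HrTypeC (σ : ℚ → (K ≃+* K)) (A : ℚ → Set K) (r : ℚ) : Prop :=
  ∃ a : K, A r = Ol (A r) * {a} ∧ A r ⊂ {a} * (σ r '' Ol (A r))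

/-- `H_r` is of Type (d). -/
def HrTypeD (σ : ℚ → (K ≃+* K)) (A : ℚ → Set K) (r : ℚ) : Prop :=
  ∃ a : K, A r = Ol (A r) * {a} ∧ A r = {a} * (σ r '' Ol (A r)) ∧
    A (-r) = jacS (Ol (A r)) * {σ (-r) a⁻¹} ∧
    aprod (jacS (Ol (A r))) (jacS (Ol (A r))) = jacS (Ol (A r))

/-- `H_r` is of Type (e). -/
def HrTypeE (σ : ℚ → (K ≃+* K)) (A : ℚ → Set K) (r : ℚ) : Prop :=
  ∃ a b : K, A r = Ol (A r) * {a} ∧ A r = {a} * (σ r '' Ol (A r)) ∧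
    A (-r) = jacS (Ol (A r)) * {σ (-r) a⁻¹} ∧
    jacS (Ol (A r)) = Ol (A r) * {b⁻¹}

/-- `H_r` is of Type (f). -/
def HrTypeF (A : ℚ → Set K) (r : ℚ) : Prop := A r ⊂ lstar (A r)

/-- `H_r` is of Type (g). -/
def HrTypeG (V0 : Set K) (σ : ℚ → (K ≃+* K)) (A : ℚ → Set K) (r : ℚ) : Prop :=
  lstar (A r) = A r ∧
    ∀ i : ℕ, 0 < i → ¬ ∃ c : K, lstar (Mir V0 σ A r i) = Ol (A r) * {c}

/-- `H_r` is of Type (h). -/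
def HrTypeH (V0 : Set K) (σ : ℚ → (K ≃+* K)) (A : ℚ → Set K) (r : ℚ) : Prop :=
  lstar (A r) = A r ∧
    ∃ i : ℕ, 0 < i ∧ ∃ c : K, lstar (Mir V0 σ A r i) = Ol (A r) * {c}

/-- A graded map `f : ℚ → ℤ`. -/
def IsGradedMap (f : ℚ → ℤ) : Prop :=
  f 0 = 0 ∧ (∀ s t : ℚ, f s + f t ≤ f (s + t)) ∧ (∀ s : ℚ, -1 ≤ f s + f (-s))

/-!
Superadditivity makes `r ↦ f r / r` on positive rationals bounded above by `-f (-t) / t` for every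
`t > 0`; its supremum `d` satisfies `r d - 1 ≤ f r ≤ r d` for all `r`, so `f r = ⌊r d⌋` except at
points where `f r = r d - 1`. Such a defect at `s` propagates, by comparing common multiples, to a
strict inequality `f t < t d` at every `t` of the same sign as `s`, and then `f (-t) = -f t - 1`.
According as defects occur at no point, at positive points, or only at negative points, `f` is
`f_d`, `f_d^{(1)}` or `f_d^{(-1)}`.
-/

theorem exists_nat_mul_eq_nat_mul {s t : ℚ} (h : 0 < s / t) :
    ∃ a b : ℕ, 0 < b ∧ (b : ℚ) * s = a * t := by
  have ht : t ≠ 0 := by rintro rfl; simp at h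
  refine ⟨(s / t).num.toNat, (s / t).den, (s / t).den_pos, ?_⟩
  have hnum : (((s / t).num.toNat : ℕ) : ℚ) = (s / t).num := by
    exact_mod_cast Int.toNat_of_nonneg (Rat.num_pos.2 h).le
  rw [hnum, ← Rat.mul_den_eq_num]
  field_simp

namespace IsGradedMap

variable {f : ℚ → ℤ}

theorem add_neg_le_zero (hf : IsGradedMap f) (s : ℚ) : f s + f (-s) ≤ 0 := by
  simpa [hf.1] using hf.2.1 s (-s)

theorem nat_mul_le (hf : IsGradedMap f) (n : ℕ) (s : ℚ) : (n : ℤ) * f s ≤ f (n * s) := by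
  induction n with
  | zero => simp [hf.1]
  | succ n ih =>
    have h := hf.2.1 (n * s) s
    rw [← add_one_mul] at h
    push_cast
    linarith

theorem div_le_neg_div (hf : IsGradedMap f) {s t : ℚ} (hs : 0 < s) (ht : 0 < t) :
    (f s : ℝ) / s ≤ -(f (-t) : ℝ) / t := by
  obtain ⟨a, b, hb, hab⟩ := exists_nat_mul_eq_nat_mul (div_pos hs ht)
  have hbs := hf.nat_mul_le b s
  have hat := hf.nat_mul_le a (-t)
  have hsum := hf.add_neg_le_zero (b * s)
  rw [mul_neg, ← hab] at hat
  have hint : (b : ℝ) * f s ≤ -((a : ℝ) * f (-t)) := by exact_mod_cast (by linarith : _ ≤ _)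
  have habR : (b : ℝ) * s = a * t := by exact_mod_cast hab
  have hsR : (0 : ℝ) < s := by exact_mod_cast hs
  have htR : (0 : ℝ) < t := by exact_mod_cast ht
  have hbR : (0 : ℝ) < b := by exact_mod_cast hb
  rw [div_le_div_iff₀ hsR htR, ← mul_le_mul_iff_right₀ hbR]
  linarith [mul_le_mul_of_nonneg_left hint htR.le, congrArg (· * (f (-t) : ℝ)) habR]

theorem exists_le_mul (hf : IsGradedMap f) : ∃ d : ℝ, ∀ r : ℚ, (f r : ℝ) ≤ r * d := by
  set S := (fun r : ℚ => (f r : ℝ) / r) '' Set.Ioi 0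
  have hne : S.Nonempty := ⟨_, Set.mem_image_of_mem _ (Set.mem_Ioi.2 one_pos)⟩
  have hle : ∀ t : ℚ, 0 < t → sSup S ≤ -(f (-t) : ℝ) / t := fun t ht =>
    csSup_le hne (Set.forall_mem_image.2 fun s hs => hf.div_le_neg_div hs ht)
  have hbdd : BddAbove S :=
    ⟨_, Set.forall_mem_image.2 fun s hs => hf.div_le_neg_div (t := 1) hs one_pos⟩
  refine ⟨sSup S, fun r => ?_⟩
  rcases lt_trichotomy r 0 with hr | rfl | hr
  · have h := hle (-r) (neg_pos.2 hr)
    have hrR : (0 : ℝ) < -r := by exact_mod_cast neg_pos.2 hr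
    rw [neg_neg, Rat.cast_neg, le_div_iff₀ hrR] at h
    linarith
  · simp [hf.1]
  · have h := le_csSup hbdd (Set.mem_image_of_mem _ (Set.mem_Ioi.2 hr))
    rwa [div_le_iff₀ (by exact_mod_cast hr), mul_comm] at h

variable {d : ℝ}

theorem mul_sub_one_le (hf : IsGradedMap f) (hd : ∀ r : ℚ, (f r : ℝ) ≤ r * d) (r : ℚ) :
    r * d - 1 ≤ (f r : ℝ) := by
  have h := hd (-r)
  have hsum : (-1 : ℝ) ≤ f r + f (-r) := by exact_mod_cast hf.2.2 r
  push_cast at h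
  linarith

theorem eq_floor_of_ne (hf : IsGradedMap f) (hd : ∀ r : ℚ, (f r : ℝ) ≤ r * d) {r : ℚ}
    (hr : (f r : ℝ) ≠ r * d - 1) : f r = ⌊(r : ℝ) * d⌋ :=
  (Int.floor_eq_iff.2 ⟨hd r, by linarith [lt_of_le_of_ne (hf.mul_sub_one_le hd r) hr.symm]⟩).symm

theorem neg_eq_of_lt (hf : IsGradedMap f) (hd : ∀ r : ℚ, (f r : ℝ) ≤ r * d) {r : ℚ}
    (hr : (f r : ℝ) < r * d) : f (-r) = -f r - 1 := by
  have h := hd (-r)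
  push_cast at h
  have hlt : f (-r) < -f r := by exact_mod_cast (by linarith : (f (-r) : ℝ) < -f r)
  have := hf.2.2 r
  omega

theorem lt_mul_of_eq_mul_sub_one (hf : IsGradedMap f) (hd : ∀ r : ℚ, (f r : ℝ) ≤ r * d)
    {s t : ℚ} (hs : (f s : ℝ) = s * d - 1) (hst : 0 < s / t) : (f t : ℝ) < t * d := by
  obtain ⟨a, b, hb, hab⟩ := exists_nat_mul_eq_nat_mul hst
  obtain ⟨n, rfl⟩ := Nat.exists_eq_add_one_of_ne_zero hb.ne'
  have hneg : (f (-s) : ℝ) = -(s * d) := by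
    have h := hd (-s)
    have hsum : (-1 : ℝ) ≤ f s + f (-s) := by exact_mod_cast hf.2.2 s
    push_cast at h
    linarith
  -- `(n + 1) s` and `n (-s)` add up to `s`, which bounds `f ((n + 1) s)` by `(n + 1) s d - 1`
  have hsplit : f ((n + 1 : ℕ) * s) + f (n * -s) ≤ f s := by
    convert hf.2.1 ((n + 1 : ℕ) * s) (n * -s) using 2
    push_cast
    ring
  have hmul := hf.nat_mul_le n (-s)
  have hat := hf.nat_mul_le a t
  rw [← hab] at hat
  have hint : (a : ℝ) * f t ≤ f s - n * f (-s) := by exact_mod_cast (by linarith : _ ≤ _)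
  have habR : ((n : ℝ) + 1) * s = a * t := by exact_mod_cast hab
  rw [hs, hneg] at hint
  by_contra! h
  linarith [mul_nonneg (Nat.cast_nonneg a : (0 : ℝ) ≤ a) (sub_nonneg.2 h), congrArg (· * d) habR]

end IsGradedMap

/-- Every graded map `f : ℚ → ℤ` is equal to `f_d`, to `f_d^{(1)}`, or to `f_d^{(-1)}`
for some real number `d`. -/
theorem stmt1 (f : ℚ → ℤ) (hf : IsGradedMap f) :
    ∃ d : ℝ,
      (∀ r : ℚ, f r = ⌊(r : ℝ) * d⌋) ∨
      (∀ r : ℚ, 0 < r →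
        ((r : ℝ) * d - 1 ≤ (f r : ℝ) ∧ (f r : ℝ) < (r : ℝ) * d) ∧ f (-r) = -f r - 1) ∨
      (∀ r : ℚ, 0 < r → f r = ⌊(r : ℝ) * d⌋ ∧ f (-r) = -⌊(r : ℝ) * d⌋ - 1) := by
  obtain ⟨d, hd⟩ := hf.exists_le_mul
  refine ⟨d, ?_⟩
  by_cases hpos : ∃ s : ℚ, 0 < s ∧ (f s : ℝ) = s * d - 1
  · obtain ⟨s, hs, hfs⟩ := hpos
    refine Or.inr (Or.inl fun r hr => ?_)
    have hlt := hf.lt_mul_of_eq_mul_sub_one hd hfs (div_pos hs hr)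
    exact ⟨⟨hf.mul_sub_one_le hd r, hlt⟩, hf.neg_eq_of_lt hd hlt⟩
  push Not at hpos
  by_cases hneg : ∃ s : ℚ, s < 0 ∧ (f s : ℝ) = s * d - 1
  · obtain ⟨s, hs, hfs⟩ := hneg
    refine Or.inr (Or.inr fun r hr => ?_)
    have hfloor := hf.eq_floor_of_ne hd (hpos r hr)
    have hlt := hf.lt_mul_of_eq_mul_sub_one hd hfs (div_pos_of_neg_of_neg hs (neg_neg_of_pos hr))
    have hfr := hf.neg_eq_of_lt hd hlt
    rw [neg_neg] at hfr
    omega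
  push Not at hneg
  refine Or.inl fun r => hf.eq_floor_of_ne hd ?_
  rcases lt_trichotomy r 0 with hr | rfl | hr
  · exact hneg r hr
  · simp [hf.1]
  · exact hpos r hr
end

section
/- Let (A_r)_{r∈ℚ} be a graded extension of V in K[ℚ,σ] and let s ∈ ℚ with s > 0. If H_s is of Type (II), then H_{s/n} is of Type (II) for every positive integer n. -/
open scoped Pointwise

variable {K : Type*} [DivisionRing K]

theorem HrTypeI.intCast_mul {σ : ℚ → (K ≃+* K)} {A : ℚ → Set K} {r : ℚ} (h : HrTypeI σ A r)
    {m : ℤ} (hm : 0 < m) : HrTypeI σ A (m * r) := by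
  intro i j hi hj
  simpa only [Int.cast_mul, Int.cast_add, mul_assoc, add_mul] using
    h (i * m) (j * m) (mul_pos hi hm) (mul_pos hj hm)

theorem stmt5_general (σ : ℚ → (K ≃+* K)) (A : ℚ → Set K) (s : ℚ) (hII : ¬ HrTypeI σ A s) :
    ∀ n : ℕ, 0 < n → ¬ HrTypeI σ A (s / (n : ℚ)) := by
  intro n hn hI
  have hs : ((n : ℤ) : ℚ) * (s / n) = s := by
    push_cast
    field_simp
  exact hII (hs ▸ hI.intCast_mul (Int.natCast_pos.mpr hn))

/-- If `H_s` is of Type (II), then `H_{s/n}` is of Type (II) for every positive integer `n`. -/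
theorem stmt5 (V : Subring K) (hV : IsTVR V) (hVK : (V : Set K) ≠ Set.univ)
    (σ : ℚ → (K ≃+* K)) (hσ : ∀ r s : ℚ, σ (r + s) = (σ r).trans (σ s))
    (A : ℚ → Set K) (hA : IsGradedExtQ (V : Set K) σ A)
    (s : ℚ) (hs : 0 < s) (hII : ¬ HrTypeI σ A s) :
    ∀ n : ℕ, 0 < n → ¬ HrTypeI σ A (s / (n : ℚ)) :=
  stmt5_general σ A s hII
end

section
/- Let (A_r)_{r∈ℚ} be a graded extension of V in K[ℚ,σ] of Type (II). Then there exists a positive integer k₀ such that H_{1/k₀} is a graded extension of V in K[X^{1/k₀}, X^{-1/k₀}; σ(1/k₀)] of Type (II). -/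
open scoped Pointwise

variable {K : Type*} [DivisionRing K]

/-!
Two positive rationals `g, h` witnessing Type (II) are positive integer multiples of
`1 / k₀` for `k₀ = den g * den h`, so the same pair witnesses Type (II) of `H_{1/k₀}`;
and the restriction of a graded extension to the subgroup `ℤ (1/k₀)` is again one.
-/

theorem IsGradedExtOn.mono {H H' : Set ℚ} {V0 : Set K}
    {σ : ℚ → (K ≃+* K)} {A : ℚ → Set K} (hA : IsGradedExtOn H' V0 σ A) (hH : H ⊆ H') :
    IsGradedExtOn H V0 σ A :=
  let ⟨hsub, h0, hunion, hmul⟩ := hA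
  ⟨fun r hr => hsub r (hH hr), h0, fun r hr => hunion r (hH hr),
    fun r hr s hs => hmul r (hH hr) s (hH hs)⟩

theorem Rat.exists_pos_int_mul_one_div_eq {q : ℚ} (hq : 0 < q) {k : ℕ} (hk : 0 < k)
    (hqk : q.den ∣ k) : ∃ i : ℤ, 0 < i ∧ (i : ℚ) * (1 / k) = q := by
  obtain ⟨m, rfl⟩ := hqk
  have hm : 0 < m := Nat.pos_of_mul_pos_left hk
  refine ⟨q.num * m, mul_pos (Rat.num_pos.mpr hq) (by exact_mod_cast hm), ?_⟩
  have hm' : (m : ℚ) ≠ 0 := by positivity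
  push_cast
  rw [mul_one_div, mul_div_mul_right _ _ hm', Rat.num_div_den]

theorem HrTypeI.aprod_eq_of_den_dvd {σ : ℚ → (K ≃+* K)}
    {A : ℚ → Set K} {k : ℕ} (hk : 0 < k) (hI : HrTypeI σ A (1 / k)) {g h : ℚ}
    (hg : 0 < g) (hh : 0 < h) (hgk : g.den ∣ k) (hhk : h.den ∣ k) :
    aprod (A g) (σ g '' A h) = A (g + h) ∧
      aprod (A (-g)) (σ (-g) '' A (-h)) = A (-g - h) := by
  obtain ⟨i, hi, rfl⟩ := Rat.exists_pos_int_mul_one_div_eq hg hk hgk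
  obtain ⟨j, hj, rfl⟩ := Rat.exists_pos_int_mul_one_div_eq hh hk hhk
  have hsum : (((i + j : ℤ) : ℚ) * (1 / k)) = (i : ℚ) * (1 / k) + (j : ℚ) * (1 / k) := by
    push_cast; ring
  rw [← hsum, sub_eq_add_neg, ← neg_add, ← hsum]
  exact hI i j hi hj

theorem stmt7_general (V : Subring K)
    (σ : ℚ → (K ≃+* K))
    (A : ℚ → Set K) (hA : IsGradedExtQ (V : Set K) σ A)
    (hII : ¬ FamTypeI σ A) :
    ∃ k₀ : ℕ, 0 < k₀ ∧ IsGradedExtHr (V : Set K) σ A (1 / (k₀ : ℚ)) ∧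
      ¬ HrTypeI σ A (1 / (k₀ : ℚ)) := by
  obtain ⟨g, h, hg, hh, hne⟩ : ∃ g h : ℚ, 0 < g ∧ 0 < h ∧
      ¬ (aprod (A g) (σ g '' A h) = A (g + h) ∧
        aprod (A (-g)) (σ (-g) '' A (-h)) = A (-g - h)) := by
    simpa [FamTypeI] using hII
  have hk : 0 < g.den * h.den := by positivity
  refine ⟨g.den * h.den, hk, IsGradedExtOn.mono hA (Set.subset_univ _), fun hI => hne ?_⟩
  exact hI.aprod_eq_of_den_dvd hk hg hh (dvd_mul_right _ _) (dvd_mul_left _ _)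

/-- If `(A_r)` is of Type (II), then there is a positive integer `k₀` such that `H_{1/k₀}`
is a graded extension of `V` in `K[X^{1/k₀}, X^{-1/k₀}; σ(1/k₀)]` of Type (II). -/
theorem stmt7 (V : Subring K) (hV : IsTVR V) (hVK : (V : Set K) ≠ Set.univ)
    (σ : ℚ → (K ≃+* K)) (hσ : ∀ r s : ℚ, σ (r + s) = (σ r).trans (σ s))
    (A : ℚ → Set K) (hA : IsGradedExtQ (V : Set K) σ A)
    (hII : ¬ FamTypeI σ A) :
    ∃ k₀ : ℕ, 0 < k₀ ∧ IsGradedExtHr (V : Set K) σ A (1 / (k₀ : ℚ)) ∧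
      ¬ HrTypeI σ A (1 / (k₀ : ℚ)) :=
  stmt7_general V σ A hA hII
end

section
/- Let r ∈ ℚ, r > 0, and let H_r = (A_{ir})_{i∈ℤ} be a graded extension of V in K[X^r, X^{-r}; σ(r)] of Type (e) with O_l(A_r) = W. Then: (i) for every i ∈ ℤ there exists β_{ir} ∈ K with WA_{ir} = Wβ_{ir} = β_{ir}W^{σ(ir)}; (ii) the family (WA_{ir})_{i∈ℤ} is a graded extension of W in K[X^r, X^{-r}; σ(r)] of Type (e). -/
open scoped Pointwise

variable {K : Type*} [DivisionRing K]

/-!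
Write `d = b⁻¹`, so `J(W) = W d`, and say that `u` *twists* `S` into `T` when `S u = u T`.
Since `a` twists `W` into `W^{σ(r)}`, the twisted powers `a_n = a σ(r)(a) ⋯ σ((n-1)r)(a)` lie in
`A_{nr}` and twist `W` into `W^{σ(nr)}`; in particular conjugation by `a_n` preserves `J(W)`.
Multiplying by suitable elements of `A_{-r} = J(W) σ(-r)(a⁻¹)` then traps the left `W`-module
`W A_{±nr}` between `W d^n c` and `W c` for an element `c` twisting `W` into `W^{σ(±nr)}`.
Because `J(W) = W d` is principal, no left `W`-module lies strictly between `W d c` and `W c`, so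
`W A_{±nr} = W d^j c`; as `d` normalizes `W`, this gives (i). By (i) every `W A_{ir}` is also a
right `W^{σ(ir)}`-module, which gives the product rule of (ii); finally `W A_{±r} = A_{±r}`.
-/

namespace GradedExtension

theorem mem_mul_singleton {S : Set K} {c z : K} : z ∈ S * {c} ↔ ∃ x ∈ S, x * c = z := by
  simp [Set.mul_singleton]

theorem mem_singleton_mul {S : Set K} {c z : K} : z ∈ {c} * S ↔ ∃ x ∈ S, c * x = z := by
  simp [Set.singleton_mul]

theorem mem_of_eq_mul_singleton {W : Subring K} {M : Set K} {c : K} (h : M = W * {c}) : c ∈ M :=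
  h ▸ mem_mul_singleton.2 ⟨1, W.one_mem, one_mul c⟩

theorem mul_singleton_subset_of_mem {W M : Set K} (hM : W ⊆ Ol M) {c : K} (hc : c ∈ M) :
    W * {c} ⊆ M := fun _ hz =>
  let ⟨_, hw, hwc⟩ := mem_mul_singleton.1 hz
  hwc ▸ hM hw c hc

section Twist

variable {S T U : Set K} {u v : K}

theorem twist_trans (hu : S * {u} = {u} * T) (hv : T * {v} = {v} * U) :
    S * {u * v} = {u * v} * U := by
  rw [← Set.singleton_mul_singleton, ← mul_assoc, hu, mul_assoc, hv, ← mul_assoc]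

theorem twist_inv (hu0 : u ≠ 0) (hu : S * {u} = {u} * T) : T * {u⁻¹} = {u⁻¹} * S :=
  calc T * {u⁻¹} = {u⁻¹} * ({u} * T) * {u⁻¹} := by
        rw [← mul_assoc, Set.singleton_mul_singleton, inv_mul_cancel₀ hu0, Set.singleton_one,
          one_mul]
    _ = {u⁻¹} * S := by
        rw [← hu, mul_assoc, mul_assoc, Set.singleton_mul_singleton, mul_inv_cancel₀ hu0,
          Set.singleton_one, mul_one]

theorem twist_image (τ : K ≃+* K) (hu : S * {u} = {u} * T) :
    τ '' S * {τ u} = {τ u} * τ '' T := by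
  simpa only [Set.image_mul, Set.image_singleton] using congrArg (τ '' ·) hu

theorem twist_pow (hu : S * {u} = {u} * S) (n : ℕ) : S * {u ^ n} = {u ^ n} * S := by
  induction n with
  | zero => rw [pow_zero, Set.singleton_one, mul_one, one_mul]
  | succ n ih => rw [pow_succ]; exact twist_trans ih hu

end Twist

section Aprod

variable {S T : Set K}

theorem mul_mem_aprod {x y : K} (hx : x ∈ S) (hy : y ∈ T) : x * y ∈ aprod S T :=
  AddSubgroup.subset_closure (Set.mul_mem_mul hx hy)

theorem map_mem_of_mem_aprod (f : K →+ K) (U : AddSubgroup K)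
    (h : ∀ x ∈ S, ∀ y ∈ T, f (x * y) ∈ U) {z : K} (hz : z ∈ aprod S T) : f z ∈ U := by
  have : AddSubgroup.closure (S * T) ≤ U.comap f := by
    rw [AddSubgroup.closure_le]
    rintro _ ⟨x, hx, y, hy, rfl⟩
    exact h x hx y hy
  exact this hz

theorem aprod_subset (U : AddSubgroup K) (h : ∀ x ∈ S, ∀ y ∈ T, x * y ∈ U) :
    aprod S T ⊆ U :=
  fun _ hz => map_mem_of_mem_aprod (AddMonoidHom.id K) U h hz

theorem subset_aprod_of_one_mem (hS : (1 : K) ∈ S) : T ⊆ aprod S T :=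
  fun y hy => by simpa using mul_mem_aprod hS hy

theorem isAddSubgrp_aprod (S T : Set K) : IsAddSubgrp (aprod S T) :=
  ⟨AddSubgroup.zero_mem _, fun _ hx _ hy => AddSubgroup.sub_mem _ hx hy⟩

theorem coe_subset_Ol_aprod (W : Subring K) (T : Set K) : (W : Set K) ⊆ Ol (aprod W T) :=
  fun w hw _ hz => map_mem_of_mem_aprod (AddMonoidHom.mulLeft w) (AddSubgroup.closure _)
    (fun x hx y hy => show w * (x * y) ∈ aprod _ _ from
      mul_assoc w x y ▸ mul_mem_aprod (W.mul_mem hw hx) hy) hz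

def _root_.IsAddSubgrp.toAddSubgroup {S : Set K} (hS : IsAddSubgrp S) : AddSubgroup K where
  carrier := S
  zero_mem' := hS.1
  add_mem' {x y} hx hy := by simpa using hS.2 x hx _ (hS.2 0 hS.1 y hy)
  neg_mem' {x} hx := by simpa using hS.2 0 hS.1 x hx

theorem aprod_eq_of_subset_Ol {W : Subring K} (hS : IsAddSubgrp S) (hWS : (W : Set K) ⊆ Ol S) :
    aprod W S = S :=
  (aprod_subset hS.toAddSubgroup fun _ hw _ hx => hWS hw _ hx).antisymm
    (subset_aprod_of_one_mem W.one_mem)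

def olSubring (S : AddSubgroup K) : Subring K where
  carrier := Ol S
  mul_mem' {x y} hx hy z hz := by simpa [mul_assoc] using hx _ (hy z hz)
  one_mem' z hz := by simpa using hz
  add_mem' {x y} hx hy z hz := by simpa [add_mul] using S.add_mem (hx z hz) (hy z hz)
  zero_mem' z _ := by simp
  neg_mem' {x} hx z hz := by simpa using S.neg_mem (hx z hz)

end Aprod

section Jacobson

variable {W : Subring K}

theorem _root_.IsTVR.mono {V : Subring K} (hV : IsTVR V) (hVW : V ≤ W) : IsTVR W :=
  fun k hk => (hV k hk).imp (@hVW _) (@hVW _)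

theorem mul_mem_jacS_left {w j : K} (hw : w ∈ W) (hj : j ∈ jacS (W : Set K)) :
    w * j ∈ jacS (W : Set K) := by
  refine ⟨W.mul_mem hw hj.1, or_iff_not_imp_left.2 fun h0 hinv => ?_⟩
  refine hj.2.elim (right_ne_zero_of_mul h0) fun hj' => hj' ?_
  simpa [mul_assoc, left_ne_zero_of_mul h0] using W.mul_mem hinv hw

theorem mul_mem_jacS_right {w j : K} (hj : j ∈ jacS (W : Set K)) (hw : w ∈ W) :
    j * w ∈ jacS (W : Set K) := by
  refine ⟨W.mul_mem hj.1 hw, or_iff_not_imp_left.2 fun h0 hinv => ?_⟩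
  refine hj.2.elim (left_ne_zero_of_mul h0) fun hj' => hj' ?_
  simpa [right_ne_zero_of_mul h0] using W.mul_mem hw hinv

theorem inv_mul_mem_of_mem_jacS (hWv : IsTVR W) {d j : K} (hJ : jacS (W : Set K) = W * {d})
    (hd : d ≠ 0) (hj : j ∈ jacS (W : Set K)) : d⁻¹ * j ∈ W := by
  by_contra h
  have hj0 : j ≠ 0 := by rintro rfl; simp at h
  have hinv : (d⁻¹ * j)⁻¹ ∈ jacS (W : Set K) :=
    ⟨(hWv _ (mul_ne_zero (inv_ne_zero hd) hj0)).resolve_left h, Or.inr (by rwa [inv_inv])⟩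
  obtain ⟨w, hw, hwd⟩ := mem_mul_singleton.1 (hJ ▸ hinv)
  rw [mul_inv_rev, inv_inv] at hwd
  exact hj.2.elim hj0 fun hj' => hj' (mul_right_cancel₀ hd hwd ▸ hw)

theorem mul_singleton_comm_of_jacS_eq (hWv : IsTVR W) {d : K}
    (hJ : jacS (W : Set K) = W * {d}) : (W : Set K) * {d} = {d} * W := by
  ext z
  constructor
  · intro hz
    obtain ⟨w, hw, rfl⟩ := mem_mul_singleton.1 hz
    rcases eq_or_ne d 0 with rfl | hd
    · exact mem_singleton_mul.2 ⟨0, W.zero_mem, by simp⟩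
    refine mem_singleton_mul.2 ⟨d⁻¹ * (w * d), ?_, mul_inv_cancel_left₀ hd _⟩
    exact inv_mul_mem_of_mem_jacS hWv hJ hd (hJ ▸ mem_mul_singleton.2 ⟨w, hw, rfl⟩)
  · intro hz
    obtain ⟨w, hw, rfl⟩ := mem_singleton_mul.1 hz
    exact hJ ▸ mul_mem_jacS_right (mem_of_eq_mul_singleton hJ) hw

theorem conj_mem_iff {τ : K ≃+* K} {u : K} (hu0 : u ≠ 0)
    (hu : (W : Set K) * {u} = {u} * (τ '' W)) {x : K} : u * τ x * u⁻¹ ∈ W ↔ x ∈ W := by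
  constructor
  · intro hx
    have h : u * τ x * u⁻¹ * u ∈ (W : Set K) * {u} := mem_mul_singleton.2 ⟨_, hx, rfl⟩
    rw [hu, inv_mul_cancel_right₀ hu0] at h
    obtain ⟨_, ⟨y, hy, rfl⟩, hyx⟩ := mem_singleton_mul.1 h
    exact τ.injective (mul_left_cancel₀ hu0 hyx) ▸ hy
  · intro hx
    have h : u * τ x ∈ {u} * (τ '' W) := mem_singleton_mul.2 ⟨_, ⟨x, hx, rfl⟩, rfl⟩
    obtain ⟨w, hw, hwx⟩ := mem_mul_singleton.1 (hu ▸ h)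
    rwa [← hwx, mul_inv_cancel_right₀ hu0]

theorem conj_mem_jacS_iff {τ : K ≃+* K} {u : K} (hu0 : u ≠ 0)
    (hu : (W : Set K) * {u} = {u} * (τ '' W)) {x : K} :
    u * τ x * u⁻¹ ∈ jacS (W : Set K) ↔ x ∈ jacS (W : Set K) := by
  have hinv : (u * τ x * u⁻¹)⁻¹ = u * τ x⁻¹ * u⁻¹ := by
    rw [map_inv₀, mul_inv_rev, mul_inv_rev, inv_inv, mul_assoc]
  simp only [jacS, Set.mem_ofPred_eq, SetLike.mem_coe, hinv, conj_mem_iff hu0 hu,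
    mul_eq_zero, inv_eq_zero, map_eq_zero_iff _ τ.injective, hu0, false_or, or_false]

theorem coe_eq_univ_of_jacS_eq_zero (hWv : IsTVR W) (hJ : jacS (W : Set K) = W * {0}) :
    (W : Set K) = Set.univ := by
  refine Set.eq_univ_of_forall fun k => by_contra fun hk => ?_
  have hk0 : k ≠ 0 := by rintro rfl; exact hk W.zero_mem
  have hkJ : k⁻¹ ∈ jacS (W : Set K) :=
    ⟨(hWv k hk0).resolve_left hk, Or.inr (by rwa [inv_inv])⟩
  obtain ⟨w, -, hw⟩ := mem_mul_singleton.1 (hJ ▸ hkJ)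
  exact inv_ne_zero hk0 (by simpa using hw.symm)

end Jacobson

section Classification

variable {W M : Set K} {d : K}

theorem subset_mul_singleton_mul_of_notMem (hJ : jacS W = W * {d}) (hM : W ⊆ Ol M) {c : K}
    (hMc : M ⊆ W * {c}) (hc : c ∉ M) : M ⊆ W * {d * c} := by
  intro x hx
  obtain ⟨w, hw, rfl⟩ := mem_mul_singleton.1 (hMc hx)
  by_cases hwJ : w ∈ jacS W
  · obtain ⟨w', hw', rfl⟩ := mem_mul_singleton.1 (hJ ▸ hwJ)
    exact mem_mul_singleton.2 ⟨w', hw', (mul_assoc _ _ _).symm⟩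
  · have hunit : w ≠ 0 ∧ w⁻¹ ∈ W := by simpa [jacS, hw, not_or] using hwJ
    exact absurd (by simpa [inv_mul_cancel_left₀ hunit.1] using hM hunit.2 _ hx) hc

theorem exists_eq_mul_singleton_pow_mul (hJ : jacS W = W * {d}) (hM : W ⊆ Ol M) (n : ℕ)
    {c : K} (hlow : W * {d ^ n * c} ⊆ M) (hup : M ⊆ W * {c}) :
    ∃ j : ℕ, M = W * {d ^ j * c} := by
  induction n generalizing c with
  | zero =>
    rw [pow_zero, one_mul] at hlow
    exact ⟨0, by rw [pow_zero, one_mul]; exact hup.antisymm hlow⟩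
  | succ n ih =>
    by_cases hc : c ∈ M
    · refine ⟨0, ?_⟩
      rw [pow_zero, one_mul]
      exact hup.antisymm (mul_singleton_subset_of_mem hM hc)
    · obtain ⟨j, hj⟩ := ih (c := d * c) (by rwa [← mul_assoc, ← pow_succ])
        (subset_mul_singleton_mul_of_notMem hJ hM hup hc)
      exact ⟨j + 1, by rw [hj, pow_succ, mul_assoc]⟩

theorem exists_twist_of_subset_of_subset {W : Subring K} (hWv : IsTVR W)
    (hJ : jacS (W : Set K) = W * {d}) (hM : (W : Set K) ⊆ Ol M) {n : ℕ} {c : K} {T : Set K}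
    (hlow : (W : Set K) * {d ^ n * c} ⊆ M) (hup : M ⊆ W * {c})
    (hc : (W : Set K) * {c} = {c} * T) :
    ∃ β : K, M = W * {β} ∧ (W : Set K) * {β} = {β} * T :=
  let ⟨j, hj⟩ := exists_eq_mul_singleton_pow_mul hJ hM n hlow hup
  ⟨d ^ j * c, hj, twist_trans (twist_pow (mul_singleton_comm_of_jacS_eq hWv hJ) j) hc⟩

end Classification

def IsAutHom (σ : ℚ → K ≃+* K) : Prop := ∀ r s : ℚ, σ (r + s) = (σ r).trans (σ s)

namespace IsAutHom

variable {σ : ℚ → K ≃+* K} (hσ : IsAutHom σ)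
include hσ

theorem add_apply (r s : ℚ) (x : K) : σ (r + s) x = σ s (σ r x) := by rw [hσ]; rfl

theorem zero_apply (x : K) : σ 0 x = x :=
  (σ 0).injective (by rw [← hσ.add_apply, zero_add])

theorem neg_apply_apply (s : ℚ) (x : K) : σ (-s) (σ s x) = x := by
  rw [← hσ.add_apply, add_neg_cancel, hσ.zero_apply]

theorem apply_neg_apply (s : ℚ) (x : K) : σ s (σ (-s) x) = x := by
  rw [← hσ.add_apply, neg_add_cancel, hσ.zero_apply]

theorem image_image (s t : ℚ) (S : Set K) : σ t '' (σ s '' S) = σ (s + t) '' S := by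
  simp only [Set.image_image, hσ.add_apply]

theorem image_zero (S : Set K) : σ 0 '' S = S := by
  simp only [hσ.zero_apply, Set.image_id']

end IsAutHom

/-- The coefficient of `(a X^r)^n` in `K[X^r, X^{-r}; σ(r)]`. -/
def twistedPow (σ : ℚ → K ≃+* K) (r : ℚ) (a : K) : ℕ → K
  | 0 => 1
  | n + 1 => twistedPow σ r a n * σ (n * r) a

section TwistedPow

variable {σ : ℚ → K ≃+* K} {r : ℚ} {a : K}

theorem twistedPow_zero : twistedPow σ r a 0 = 1 := rfl

theorem twistedPow_succ (n : ℕ) :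
    twistedPow σ r a (n + 1) = twistedPow σ r a n * σ (n * r) a := rfl

theorem twistedPow_succ' (hσ : IsAutHom σ) (n : ℕ) :
    twistedPow σ r a (n + 1) = a * σ r (twistedPow σ r a n) := by
  induction n with
  | zero => simp [twistedPow, hσ.zero_apply]
  | succ n ih =>
    nth_rewrite 1 [twistedPow_succ (n + 1), ih]
    rw [twistedPow_succ n, map_mul, mul_assoc, ← hσ.add_apply]
    push_cast
    ring_nf

theorem twistedPow_ne_zero (ha : a ≠ 0) (n : ℕ) : twistedPow σ r a n ≠ 0 := by
  induction n with
  | zero => exact one_ne_zero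
  | succ n ih => exact mul_ne_zero ih ((map_ne_zero _).2 ha)

theorem twist_twistedPow (hσ : IsAutHom σ) {S : Set K} (ha : S * {a} = {a} * (σ r '' S))
    (n : ℕ) : S * {twistedPow σ r a n} = {twistedPow σ r a n} * (σ (n * r) '' S) := by
  induction n with
  | zero => simp [twistedPow, hσ.image_zero, Set.singleton_one]
  | succ n ih =>
    have h := twist_image (σ (n * r)) ha
    rw [hσ.image_image] at h
    rw [twistedPow_succ, twist_trans ih h]
    push_cast
    ring_nf

theorem twist_inv_apply_neg_twistedPow (hσ : IsAutHom σ) (ha : a ≠ 0) {S : Set K}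
    (haS : S * {a} = {a} * (σ r '' S)) (n : ℕ) :
    S * {(σ (-(n * r)) (twistedPow σ r a n))⁻¹} =
      {(σ (-(n * r)) (twistedPow σ r a n))⁻¹} * (σ (-(n * r)) '' S) := by
  have h := twist_image (σ (-(n * r))) (twist_twistedPow hσ haS n)
  rw [hσ.image_image, add_neg_cancel, hσ.image_zero] at h
  exact twist_inv ((map_ne_zero _).2 (twistedPow_ne_zero ha n)) h

end TwistedPow

section zmulSet

variable {r : ℚ}

theorem natCast_mul_mem_zmulSet (n : ℕ) : (n : ℚ) * r ∈ zmulSet r := ⟨n, by simp⟩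

theorem neg_natCast_mul_mem_zmulSet (n : ℕ) : -((n : ℚ) * r) ∈ zmulSet r := ⟨-n, by simp⟩

theorem self_mem_zmulSet : r ∈ zmulSet r := ⟨1, by simp⟩

theorem neg_self_mem_zmulSet : -r ∈ zmulSet r := ⟨-1, by simp⟩

end zmulSet

section GradedExt

variable {V W : Subring K} {σ : ℚ → K ≃+* K} {A : ℚ → Set K} {r : ℚ}

theorem mul_apply_mem (hA : IsGradedExtHr V σ A r) {s t u : ℚ} (hs : s ∈ zmulSet r)
    (ht : t ∈ zmulSet r) (hu : s + t = u) {x y : K} (hx : x ∈ A s) (hy : y ∈ A t) :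
    x * σ s y ∈ A u :=
  hu ▸ hA.2.2.2 s hs t ht (mul_mem_aprod hx ⟨y, hy, rfl⟩)

theorem aprod_mul_apply_mem (hA : IsGradedExtHr V σ A r) {s t u : ℚ} (hs : s ∈ zmulSet r)
    (ht : t ∈ zmulSet r) (hu : s + t = u) {z y : K} (hz : z ∈ aprod W (A s)) (hy : y ∈ A t) :
    z * σ s y ∈ aprod W (A u) :=
  map_mem_of_mem_aprod (AddMonoidHom.mulRight (σ s y)) (AddSubgroup.closure _)
    (fun w hw x hx => show w * x * σ s y ∈ aprod _ _ from
      (mul_assoc w x _).symm ▸ mul_mem_aprod hw (mul_apply_mem hA hs ht hu hx hy)) hz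

theorem le_of_coe_eq_Ol (hσ : IsAutHom σ) (hA : IsGradedExtHr V σ A r)
    (hW : (W : Set K) = Ol (A r)) : V ≤ W := fun v hv => by
  rw [← SetLike.mem_coe, hW]
  intro x hx
  simpa [hσ.zero_apply] using
    mul_apply_mem hA ⟨0, by simp⟩ self_mem_zmulSet (zero_add r) (hA.2.1.symm ▸ hv : v ∈ A 0) hx

theorem aprod_zero (hA : IsGradedExtHr V σ A r) (hVW : V ≤ W) : aprod W (A 0) = W := by
  refine (aprod_subset W.toAddSubgroup fun w hw v hv => ?_).antisymm fun w hw => ?_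
  · exact W.mul_mem hw (hVW (show v ∈ (V : Set K) from hA.2.1 ▸ hv))
  · simpa using mul_mem_aprod hw (hA.2.1 ▸ V.one_mem : (1 : K) ∈ A 0)

theorem aprod_aprod_image_subset (hA : IsGradedExtHr V σ A r) {s t : ℚ} (hs : s ∈ zmulSet r)
    (ht : t ∈ zmulSet r) {β : K} (hB : aprod W (A s) = W * {β})
    (hβ : (W : Set K) * {β} = {β} * (σ s '' W)) :
    aprod (aprod W (A s)) (σ s '' aprod W (A t)) ⊆ aprod W (A (s + t)) := by
  have hright : ∀ z ∈ aprod W (A s), ∀ w ∈ W, z * σ s w ∈ aprod W (A s) := by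
    intro z hz w hw
    rw [hB] at hz ⊢
    obtain ⟨w₁, hw₁, rfl⟩ := mem_mul_singleton.1 hz
    have h : β * σ s w ∈ {β} * (σ s '' W) := mem_singleton_mul.2 ⟨_, ⟨w, hw, rfl⟩, rfl⟩
    obtain ⟨w₂, hw₂, h₂⟩ := mem_mul_singleton.1 (hβ ▸ h)
    exact mem_mul_singleton.2 ⟨w₁ * w₂, W.mul_mem hw₁ hw₂, by rw [mul_assoc, h₂, mul_assoc]⟩
  refine aprod_subset (AddSubgroup.closure _) ?_
  rintro x hx _ ⟨y, hy, rfl⟩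
  refine map_mem_of_mem_aprod ((AddMonoidHom.mulLeft x).comp (σ s).toAddMonoidHom)
    (AddSubgroup.closure _) (fun w hw y' hy' => ?_) hy
  show x * σ s (w * y') ∈ aprod _ _
  rw [map_mul, ← mul_assoc]
  exact aprod_mul_apply_mem hA hs ht rfl (hright x hx w hw) hy'

theorem isGradedExtHr_aprod (hA : IsGradedExtHr V σ A r) (hVW : V ≤ W)
    (hβ : ∀ i : ℤ, ∃ β : K,
      aprod W (A (i * r)) = W * {β} ∧ (W : Set K) * {β} = {β} * (σ (i * r) '' W)) :
    IsGradedExtHr W σ (fun s => aprod W (A s)) r := by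
  have hAB : ∀ s, A s ⊆ aprod W (A s) := fun s => subset_aprod_of_one_mem W.one_mem
  refine ⟨fun s _ => isAddSubgrp_aprod _ _, aprod_zero hA hVW, fun s hs => ?_,
    fun s hs t ht => ?_⟩
  · refine Set.eq_univ_of_univ_subset (hA.2.2.1 s hs ▸ Set.union_subset_union (hAB s) ?_)
    exact Set.image_mono fun _ ⟨c, hc, hc0, hx⟩ => ⟨c, hAB _ hc, hc0, hx⟩
  · obtain ⟨i, rfl⟩ := hs
    obtain ⟨β, hB, hβ⟩ := hβ i
    exact aprod_aprod_image_subset hA ⟨i, rfl⟩ ht hB hβ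

theorem hrTypeE_aprod (hA : IsGradedExtHr V σ A r) (hW : (W : Set K) = Ol (A r))
    (hE : HrTypeE σ A r) : HrTypeE σ (fun s => aprod W (A s)) r := by
  obtain ⟨a, b, -, -, hAmr, -⟩ := id hE
  have hBr : aprod W (A r) = A r :=
    aprod_eq_of_subset_Ol (hA.1 r self_mem_zmulSet) hW.subset
  have hBmr : aprod W (A (-r)) = A (-r) := by
    refine aprod_eq_of_subset_Ol (hA.1 (-r) neg_self_mem_zmulSet) fun w hw x hx => ?_
    rw [← hW] at hAmr
    rw [hAmr] at hx ⊢
    obtain ⟨j, hj, rfl⟩ := mem_mul_singleton.1 hx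
    exact mem_mul_singleton.2 ⟨w * j, mul_mem_jacS_left hw hj, mul_assoc _ _ _⟩
  simpa only [HrTypeE, hBr, hBmr] using hE

end GradedExt

section TypeE

variable {V W : Subring K} {σ : ℚ → K ≃+* K} {A : ℚ → Set K} {r : ℚ} {a d : K}

theorem ne_zero_of_typeE (hA : IsGradedExtHr V σ A r) (hAr : A r = W * {a})
    (hAmr : A (-r) = jacS (W : Set K) * {σ (-r) a⁻¹}) : a ≠ 0 := by
  rintro rfl
  have h1 : (1 : K) ∈ A r ∪ σ r '' invS (A (-r)) :=
    (hA.2.2.1 r self_mem_zmulSet).symm ▸ Set.mem_univ 1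
  rcases h1 with h | ⟨_, ⟨c, hc, hc0, rfl⟩, -⟩
  · obtain ⟨w, -, hw⟩ := mem_mul_singleton.1 (hAr ▸ h)
    simp at hw
  · obtain ⟨j, -, rfl⟩ := mem_mul_singleton.1 (hAmr ▸ hc)
    simp at hc0

theorem twistedPow_mem (hA : IsGradedExtHr V σ A r) (haA : a ∈ A r) (n : ℕ) :
    twistedPow σ r a n ∈ A (n * r) := by
  induction n with
  | zero => simp [twistedPow_zero, hA.2.1]
  | succ n ih =>
    exact mul_apply_mem hA (natCast_mul_mem_zmulSet n) self_mem_zmulSet (by push_cast; ring) ih haA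

theorem mul_inv_twistedPow_mul_pow_mem (hσ : IsAutHom σ) (hA : IsGradedExtHr V σ A r)
    (hVW : V ≤ W) (ha : a ≠ 0) (haW : (W : Set K) * {a} = {a} * (σ r '' W))
    (hAmr : A (-r) = jacS (W : Set K) * {σ (-r) a⁻¹}) (hdJ : d ∈ jacS (W : Set K)) (n : ℕ) :
    ∀ z ∈ aprod W (A (n * r)), z * (twistedPow σ r a n)⁻¹ * d ^ n ∈ W := by
  induction n with
  | zero => simp [twistedPow_zero, aprod_zero hA hVW]
  | succ n ih =>
    intro z hz
    set u := twistedPow σ r a (n + 1) with hu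
    set s : ℚ := ((n + 1 : ℕ) : ℚ) * r with hs
    have hu0 : u ≠ 0 := twistedPow_ne_zero ha _
    -- `e` is chosen so that `σ s e = u⁻¹ d u`; it lies in `J(W)` because `u` twists `W`.
    have he : σ (-s) (u⁻¹ * d * u) ∈ jacS (W : Set K) := by
      rw [← conj_mem_jacS_iff hu0 (twist_twistedPow hσ haW (n + 1)), hσ.apply_neg_apply]
      simpa [mul_assoc, hu0] using hdJ
    have hy : σ (-s) (u⁻¹ * d * u) * σ (-r) a⁻¹ ∈ A (-r) := hAmr ▸ Set.mul_mem_mul he rfl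
    have hσy : σ s (σ (-s) (u⁻¹ * d * u) * σ (-r) a⁻¹) = u⁻¹ * d * twistedPow σ r a n := by
      rw [map_mul, hσ.apply_neg_apply, ← hσ.add_apply,
        show -r + s = n * r by rw [hs]; push_cast; ring, map_inv₀, mul_assoc _ u, hu,
        twistedPow_succ, mul_inv_cancel_right₀ ((map_ne_zero _).2 ha)]
    have h := ih _ (aprod_mul_apply_mem hA (natCast_mul_mem_zmulSet _) neg_self_mem_zmulSet
      (by push_cast; ring) hz hy)
    rw [hσy] at h
    simpa only [mul_assoc, mul_inv_cancel_left₀ (twistedPow_ne_zero ha n), pow_succ'] using h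

theorem pow_mul_inv_apply_neg_twistedPow_mem (hσ : IsAutHom σ) (hA : IsGradedExtHr V σ A r)
    (ha : a ≠ 0) (haW : (W : Set K) * {a} = {a} * (σ r '' W))
    (hAmr : A (-r) = jacS (W : Set K) * {σ (-r) a⁻¹}) (hdJ : d ∈ jacS (W : Set K)) (n : ℕ) :
    d ^ n * (σ (-(n * r)) (twistedPow σ r a n))⁻¹ ∈ A (-(n * r)) := by
  induction n with
  | zero => simp [twistedPow_zero, hA.2.1]
  | succ n ih =>
    set v := σ (-(n * r)) (twistedPow σ r a n) with hv
    have hv0 : v ≠ 0 := (map_ne_zero _).2 (twistedPow_ne_zero ha n)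
    have he : σ (n * r) (v * d * v⁻¹) ∈ jacS (W : Set K) := by
      rw [← conj_mem_jacS_iff (inv_ne_zero hv0) (twist_inv_apply_neg_twistedPow hσ ha haW n),
        hσ.neg_apply_apply]
      simpa [mul_assoc, hv0] using hdJ
    have hy : σ (n * r) (v * d * v⁻¹) * σ (-r) a⁻¹ ∈ A (-r) := hAmr ▸ Set.mul_mem_mul he rfl
    convert mul_apply_mem hA (neg_natCast_mul_mem_zmulSet n) neg_self_mem_zmulSet
      (show -(n * r) + -r = -(((n + 1 : ℕ) : ℚ) * r) by push_cast; ring) ih hy using 1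
    rw [twistedPow_succ' hσ, map_mul, map_mul, ← hσ.add_apply, hσ.neg_apply_apply,
      ← hσ.add_apply, map_inv₀, show r + -(((n + 1 : ℕ) : ℚ) * r) = -(n * r) by push_cast; ring,
      show -r + -(n * r) = -(((n + 1 : ℕ) : ℚ) * r) by push_cast; ring, ← hv, mul_inv_rev,
      pow_succ]
    simp only [mul_assoc, inv_mul_cancel_left₀ hv0]

theorem mul_apply_neg_twistedPow_mem (hA : IsGradedExtHr V σ A r) (hVW : V ≤ W)
    (haA : a ∈ A r) (n : ℕ) :
    ∀ z ∈ aprod W (A (-(n * r))), z * σ (-(n * r)) (twistedPow σ r a n) ∈ W := fun _ hz =>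
  map_mem_of_mem_aprod (AddMonoidHom.mulRight _) W.toAddSubgroup (fun w hw x hx =>
    show w * x * _ ∈ W from (mul_assoc w x _).symm ▸ W.mul_mem hw (hVW (show _ ∈ (V : Set K) from
      hA.2.1 ▸ mul_apply_mem hA (neg_natCast_mul_mem_zmulSet n) (natCast_mul_mem_zmulSet n)
        (neg_add_cancel _) hx (twistedPow_mem hA haA n)))) hz

theorem exists_twist_aprod_natCast_mul (hσ : IsAutHom σ) (hA : IsGradedExtHr V σ A r)
    (hVW : V ≤ W) (hWv : IsTVR W) (ha : a ≠ 0) (haW : (W : Set K) * {a} = {a} * (σ r '' W))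
    (haA : a ∈ A r) (hAmr : A (-r) = jacS (W : Set K) * {σ (-r) a⁻¹})
    (hJ : jacS (W : Set K) = W * {d}) (n : ℕ) :
    ∃ β : K, aprod W (A (n * r)) = W * {β} ∧ (W : Set K) * {β} = {β} * (σ (n * r) '' W) := by
  have hM := coe_subset_Ol_aprod W (A (n * r))
  have hu0 := twistedPow_ne_zero (σ := σ) (r := r) ha n
  have hlow : (W : Set K) * {twistedPow σ r a n} ⊆ aprod W (A (n * r)) :=
    mul_singleton_subset_of_mem hM (subset_aprod_of_one_mem W.one_mem (twistedPow_mem hA haA n))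
  rcases eq_or_ne d 0 with rfl | hd
  -- `J(W) = W * {0}` says `J(W) = 0` (the statement's `b` has `b⁻¹ = 0`), so `W = K`.
  · have hWu := coe_eq_univ_of_jacS_eq_zero hWv hJ
    refine exists_twist_of_subset_of_subset hWv hJ hM (n := 1) ?_ (fun z _ => ?_)
      (twist_twistedPow hσ haW n)
    · rw [pow_one, zero_mul]
      exact mul_singleton_subset_of_mem hM (AddSubgroup.zero_mem _)
    · exact mem_mul_singleton.2 ⟨_, hWu ▸ Set.mem_univ _, inv_mul_cancel_right₀ hu0 z⟩
  · refine exists_twist_of_subset_of_subset hWv hJ hM (n := n)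
      (c := (d ^ n)⁻¹ * twistedPow σ r a n) ?_ (fun z hz => ?_) ?_
    · rwa [mul_inv_cancel_left₀ (pow_ne_zero n hd)]
    · refine mem_mul_singleton.2 ⟨_, mul_inv_twistedPow_mul_pow_mem hσ hA hVW ha haW hAmr
        (mem_of_eq_mul_singleton hJ) n z hz, ?_⟩
      simp only [mul_assoc, mul_inv_cancel_left₀ (pow_ne_zero n hd), inv_mul_cancel₀ hu0, mul_one]
    · exact twist_trans (twist_inv (pow_ne_zero n hd)
        (twist_pow (mul_singleton_comm_of_jacS_eq hWv hJ) n)) (twist_twistedPow hσ haW n)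

theorem exists_twist_aprod_neg_natCast_mul (hσ : IsAutHom σ) (hA : IsGradedExtHr V σ A r)
    (hVW : V ≤ W) (hWv : IsTVR W) (ha : a ≠ 0) (haW : (W : Set K) * {a} = {a} * (σ r '' W))
    (haA : a ∈ A r) (hAmr : A (-r) = jacS (W : Set K) * {σ (-r) a⁻¹})
    (hJ : jacS (W : Set K) = W * {d}) (n : ℕ) :
    ∃ β : K, aprod W (A (-(n * r))) = W * {β} ∧
      (W : Set K) * {β} = {β} * (σ (-(n * r)) '' W) := by
  have hM := coe_subset_Ol_aprod W (A (-(n * r)))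
  have hv0 := (map_ne_zero (σ (-(n * r)))).2 (twistedPow_ne_zero (σ := σ) (r := r) ha n)
  refine exists_twist_of_subset_of_subset hWv hJ hM (n := n) ?_ (fun z hz => ?_)
    (twist_inv_apply_neg_twistedPow hσ ha haW n)
  · exact mul_singleton_subset_of_mem hM (subset_aprod_of_one_mem W.one_mem
      (pow_mul_inv_apply_neg_twistedPow_mem hσ hA ha haW hAmr (mem_of_eq_mul_singleton hJ) n))
  · exact mem_mul_singleton.2
      ⟨_, mul_apply_neg_twistedPow_mem hA hVW haA n z hz, mul_inv_cancel_right₀ hv0 z⟩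

theorem exists_twist_aprod (hσ : IsAutHom σ) (hA : IsGradedExtHr V σ A r)
    (hVW : V ≤ W) (hWv : IsTVR W) (ha : a ≠ 0) (haW : (W : Set K) * {a} = {a} * (σ r '' W))
    (haA : a ∈ A r) (hAmr : A (-r) = jacS (W : Set K) * {σ (-r) a⁻¹})
    (hJ : jacS (W : Set K) = W * {d}) (i : ℤ) :
    ∃ β : K, aprod W (A (i * r)) = W * {β} ∧ (W : Set K) * {β} = {β} * (σ (i * r) '' W) := by
  obtain ⟨n, rfl | rfl⟩ := Int.eq_nat_or_neg i
  · simpa using exists_twist_aprod_natCast_mul hσ hA hVW hWv ha haW haA hAmr hJ n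
  · rw [Int.cast_neg, Int.cast_natCast, neg_mul]
    exact exists_twist_aprod_neg_natCast_mul hσ hA hVW hWv ha haW haA hAmr hJ n

end TypeE

end GradedExtension

open GradedExtension

theorem stmt9_general (V : Subring K) (hV : IsTVR V)
    (σ : ℚ → (K ≃+* K)) (hσ : ∀ r s : ℚ, σ (r + s) = (σ r).trans (σ s))
    (A : ℚ → Set K) (r : ℚ)
    (hA : IsGradedExtHr (V : Set K) σ A r)
    (hE : HrTypeE σ A r)
    (W : Set K) (hW : W = Ol (A r)) :
    (∀ i : ℤ, ∃ β : K,
       aprod W (A ((i : ℚ) * r)) = W * {β} ∧ W * {β} = {β} * (σ ((i : ℚ) * r) '' W)) ∧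
    IsGradedExtHr W σ (fun s => aprod W (A s)) r ∧
    HrTypeE σ (fun s => aprod W (A s)) r := by
  obtain ⟨W, rfl⟩ : ∃ W' : Subring K, (W' : Set K) = W :=
    ⟨olSubring (hA.1 r self_mem_zmulSet).toAddSubgroup, hW.symm⟩
  have hVW : V ≤ W := le_of_coe_eq_Ol hσ hA hW
  have hTypeE := hrTypeE_aprod hA hW hE
  obtain ⟨a, b, hAr, hAr', hAmr, hJ⟩ := hE
  rw [← hW] at hAr hAr' hAmr hJ
  have hβ := exists_twist_aprod hσ hA hVW (hV.mono hVW) (ne_zero_of_typeE hA hAr hAmr)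
    (hAr.symm.trans hAr') (mem_of_eq_mul_singleton hAr) hAmr hJ
  exact ⟨hβ, isGradedExtHr_aprod hA hVW hβ, hTypeE⟩

/-- If `H_r` is a graded extension of `V` of Type (e) with `O_l(A_r) = W`, then (i) for every
`i ∈ ℤ` there is `β` with `WA_{ir} = Wβ = βW^{σ(ir)}`, and (ii) `(WA_{ir})_{i∈ℤ}` is a graded
extension of `W` of Type (e). -/
theorem stmt9 (V : Subring K) (hV : IsTVR V) (hVK : (V : Set K) ≠ Set.univ)
    (σ : ℚ → (K ≃+* K)) (hσ : ∀ r s : ℚ, σ (r + s) = (σ r).trans (σ s))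
    (A : ℚ → Set K) (r : ℚ) (hr : 0 < r)
    (hA : IsGradedExtHr (V : Set K) σ A r)
    (hE : HrTypeE σ A r)
    (W : Set K) (hW : W = Ol (A r)) :
    (∀ i : ℤ, ∃ β : K,
       aprod W (A ((i : ℚ) * r)) = W * {β} ∧ W * {β} = {β} * (σ ((i : ℚ) * r) '' W)) ∧
    IsGradedExtHr W σ (fun s => aprod W (A s)) r ∧
    HrTypeE σ (fun s => aprod W (A s)) r :=
  stmt9_general V hV σ hσ A r hA hE W hW
end

section
/- Let (A_r)_{r∈ℚ} be a graded extension of V in K[ℚ,σ] of Type (e) with W = ∪_{s∈ℚ} O_l(A_s), O_l(A_t) = W for some t ∈ ℚ, and J(W) = Wb⁻¹ for some b ∈ K. Suppose f : ℚ → ℤ is a nonzero graded map and (α_r)_{r∈ℚ} are elements of K with α_0 = 1 such that WA_r = Wb^{f(r)}α_r, Wα_r = α_r W^{σ(r)} and Wα_r α_s^{σ(r)} = Wα_{r+s} for all r, s ∈ ℚ. Then for every r ∈ ℚ with r ≠ 0: Wb^{f(r)-1}α_r ⊊ A_r ⊊ Wb^{f(r)}α_r if and only if W ≠ V and f(r)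 + f(-r) = 0. -/
open scoped Pointwise

variable {K : Type*} [DivisionRing K]

/-!
Write `β_r = b ^ f(r) α_r`. The ring `W = ⋃ₛ O_l(A_s)` is a directed union, hence a total
valuation ring containing `V`, and `J(W) = W b⁻¹` makes `b` normalize `W`; with
`W α_r = α_r W^{σ(r)}` and `W α_r α_s^{σ(r)} = W α_{r+s}` this gives
`W β_r σ_r(β_s) = W b ^ (f(r) + f(s)) α_{r+s}`.

Always `A_r ⊆ W β_r`, while `A_r ⊄ W b⁻¹ β_r = W b ^ (f(r) - 1) α_r`. If `w β_r ∉ A_r`, the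
axiom `A_r ∪ (A_{-r}⁻)^{σ(r)} = K` writes `(w β_r)⁻¹ = σ_r(c)` with `c ∈ W β_{-r}`, so that
`w⁻¹ ∈ W b ^ ε` for `ε = f(r) + f(-r) ∈ {-1, 0}`. Hence `W b⁻¹ β_r ⊆ A_r`, and `A_r ⊊ W β_r`
forces `ε = 0` (and `W ≠ V`, since `W A_r ⊆ A_r` when `W = V`). Conversely, if `ε = 0` and
`W β_r ⊆ A_r`, some `a ∈ A_{-r}` outside `W b⁻¹ β_{-r}` makes `β_r σ_r(a)` a unit of `W` lying in
`A_0 = V`, so `W = V`. When `b = 0`, `W = K` and `A_r` is `0` exactly when `f(r) ≠ 0`, and `K`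
exactly when `A_{-r} = 0`.
-/

lemma mem_mul_singleton_iff {S : Set K} {a x : K} : x ∈ S * {a} ↔ ∃ w ∈ S, w * a = x := by
  simp [Set.mul_singleton]

lemma mem_singleton_mul_iff {S : Set K} {a x : K} : x ∈ {a} * S ↔ ∃ w ∈ S, a * w = x := by
  simp [Set.singleton_mul]

lemma mul_singleton_mul (S : Set K) (x y : K) : S * {x * y} = S * {x} * {y} := by
  rw [mul_assoc, Set.singleton_mul_singleton]

lemma mul_singleton_cancel {S : Set K} {x y a : K} (ha : a ≠ 0)
    (h : S * {x * a} = S * {y * a}) : S * {x} = S * {y} := by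
  simpa only [mul_assoc, Set.singleton_mul_singleton, mul_inv_cancel₀ ha, mul_one] using
    congrArg (· * ({a⁻¹} : Set K)) h

lemma mul_mem_singleton_mul_iff {S : Set K} {e : K ≃+* K} {c x y : K} (hc : c ≠ 0)
    (h : {c} * e '' S = S * {c}) : c * e x ∈ S * {c * e y} ↔ x ∈ S * {y} := by
  rw [mul_singleton_mul, ← h, mul_assoc, ← Set.image_singleton, ← Set.image_mul,
    Set.singleton_mul, (mul_right_injective₀ hc).mem_set_image, e.injective.mem_set_image]

def Normalizes (S : Set K) (x : K) : Prop := {x} * S = S * {x}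

namespace Normalizes

variable {S : Set K} {x y : K}

lemma mul (hx : Normalizes S x) (hy : Normalizes S y) : Normalizes S (x * y) := by
  unfold Normalizes at *
  rw [← Set.singleton_mul_singleton, mul_assoc, hy, ← mul_assoc, hx, mul_assoc]

lemma singleton_mul_mul_singleton (hx : Normalizes S x) (y : K) :
    {x} * (S * {y}) = S * {x * y} := by
  rw [← mul_assoc, hx, mul_singleton_mul]

lemma conj_eq (hx : Normalizes S x) (hx0 : x ≠ 0) : {x} * S * {x⁻¹} = S := by
  rw [hx, mul_assoc, Set.singleton_mul_singleton, mul_inv_cancel₀ hx0, Set.singleton_one,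
    mul_one]

lemma inv (hx : Normalizes S x) (hx0 : x ≠ 0) : Normalizes S x⁻¹ := by
  unfold Normalizes
  conv_lhs => rw [← hx.conj_eq hx0]
  rw [← mul_assoc, ← mul_assoc, Set.singleton_mul_singleton, inv_mul_cancel₀ hx0,
    Set.singleton_one, one_mul]

lemma zpow (hx : Normalizes S x) (hx0 : x ≠ 0) (k : ℤ) : Normalizes S (x ^ k) := by
  induction k using Int.induction_on with
  | zero => simp [Normalizes]
  | succ n ih => rw [zpow_add_one₀ hx0]; exact ih.mul hx
  | pred n ih => rw [zpow_sub_one₀ hx0]; exact ih.mul (hx.inv hx0)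

lemma mul_singleton_eq_inv (hx : Normalizes S x) (hx0 : x ≠ 0) (hy0 : y ≠ 0)
    (h : S * {x⁻¹} = S * {y}) : S * {x} = S * {y⁻¹} := by
  calc S * {x} = {x} * (S * {y}) * {y⁻¹} := by
        rw [← hx, mul_assoc, mul_assoc, Set.singleton_mul_singleton, mul_inv_cancel₀ hy0,
          Set.singleton_one, mul_one]
    _ = S * {y⁻¹} := by rw [← h, ← mul_assoc, hx.conj_eq hx0]

end Normalizes

section Radical

variable {S T : Set K} {a x : K}

lemma image_jacS (e : K ≃+* K) (S : Set K) : e '' jacS S = jacS (e '' S) := by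
  ext y
  obtain ⟨x, rfl⟩ := e.surjective y
  simp only [jacS, Set.mem_ofPred_eq, e.injective.mem_set_image, ← map_inv₀,
    map_eq_zero_iff e e.injective]

lemma mem_iff_conj_mem (ha : a ≠ 0) (h : S * {a} = {a} * T) : x ∈ S ↔ a⁻¹ * x * a ∈ T := by
  constructor
  · intro hx
    obtain ⟨t, ht, he⟩ := mem_singleton_mul_iff.1 (h ▸ mem_mul_singleton_iff.2 ⟨x, hx, rfl⟩)
    rwa [mul_assoc, ← he, inv_mul_cancel_left₀ ha]
  · intro hx
    obtain ⟨w, hw, he⟩ := mem_mul_singleton_iff.1 (h.symm ▸ mem_singleton_mul_iff.2 ⟨_, hx, rfl⟩)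
    rw [mul_assoc, mul_inv_cancel_left₀ ha] at he
    rwa [← mul_right_cancel₀ ha he]

lemma mem_jacS_iff_conj_mem (ha : a ≠ 0) (h : S * {a} = {a} * T) :
    x ∈ jacS S ↔ a⁻¹ * x * a ∈ jacS T := by
  have hinv : (a⁻¹ * x * a)⁻¹ = a⁻¹ * x⁻¹ * a := by
    rw [mul_inv_rev, mul_inv_rev, inv_inv, mul_assoc]
  simp only [jacS, Set.mem_ofPred_eq, mem_iff_conj_mem ha h, hinv, mul_eq_zero, inv_eq_zero, ha,
    false_or, or_false]

lemma jacS_mul_singleton (ha : a ≠ 0) (h : S * {a} = {a} * T) :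
    jacS S * {a} = {a} * jacS T := by
  ext y
  rw [mem_mul_singleton_iff, mem_singleton_mul_iff]
  constructor
  · rintro ⟨x, hx, rfl⟩
    exact ⟨_, (mem_jacS_iff_conj_mem ha h).1 hx, by rw [mul_assoc, mul_inv_cancel_left₀ ha]⟩
  · rintro ⟨t, ht, rfl⟩
    refine ⟨a * t * a⁻¹, (mem_jacS_iff_conj_mem ha h).2 ?_, by rw [inv_mul_cancel_right₀ ha]⟩
    rwa [mul_assoc, inv_mul_cancel_right₀ ha, inv_mul_cancel_left₀ ha]

variable {W : Subring K} {b j w : K}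

lemma mul_mem_jacS (hj : j ∈ jacS W) (hw : w ∈ W) : j * w ∈ jacS W := by
  refine ⟨W.mul_mem hj.1 hw, or_iff_not_imp_left.2 fun h0 hinv => ?_⟩
  have hw0 : w ≠ 0 := right_ne_zero_of_mul h0
  have hj0 : j ≠ 0 := left_ne_zero_of_mul h0
  refine hj.2.resolve_left hj0 ?_
  have : w * (j * w)⁻¹ = j⁻¹ := by rw [mul_inv_rev, mul_inv_cancel_left₀ hw0]
  exact this ▸ W.mul_mem hw hinv

lemma inv_mem_jacS (hW : IsTVR W) {k : K} (hk : k ∉ W) : k⁻¹ ∈ jacS W := by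
  have hk0 : k ≠ 0 := fun h => hk (h ▸ W.zero_mem)
  exact ⟨(hW k hk0).resolve_left hk, Or.inr (by rwa [inv_inv])⟩

lemma inv_mem_of_not_mem_jacS (hx : x ∈ W) (hxJ : x ∉ jacS W) : x ≠ 0 ∧ x⁻¹ ∈ W := by
  simpa [jacS, hx] using hxJ

lemma eq_univ_of_jacS_eq_zero (hW : IsTVR W) (h : jacS (W : Set K) = {0}) :
    (W : Set K) = Set.univ :=
  Set.eq_univ_of_forall fun k => by_contra fun hk => by
    have := h ▸ inv_mem_jacS hW hk
    exact hk (by simp_all)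

variable (hb : jacS (W : Set K) = W * {b⁻¹})
include hb

lemma inv_mem_jacS_of_jacS_eq : b⁻¹ ∈ jacS W :=
  hb ▸ mem_mul_singleton_iff.2 ⟨1, W.one_mem, one_mul _⟩

lemma not_mem_of_jacS_eq (hb0 : b ≠ 0) : b ∉ (W : Set K) := by
  have := (inv_mem_jacS_of_jacS_eq hb).2.resolve_left (inv_ne_zero hb0)
  rwa [inv_inv] at this

lemma zpow_mem_of_nonpos {k : ℤ} (hk : k ≤ 0) : b ^ k ∈ (W : Set K) := by
  obtain ⟨n, rfl⟩ : ∃ n : ℕ, k = -n := ⟨(-k).toNat, by omega⟩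
  rw [zpow_neg, zpow_natCast, ← inv_pow]
  exact W.pow_mem (inv_mem_jacS_of_jacS_eq hb).1 n

lemma conj_mem_of_jacS_eq (hW : IsTVR W) (hb0 : b ≠ 0) (hw : w ∈ W) : b * w * b⁻¹ ∈ W := by
  by_contra hy
  have hw0 : w ≠ 0 := by rintro rfl; simp at hy
  -- `(b w b⁻¹)⁻¹ ∈ W b⁻¹` puts `b w⁻¹` in `W`, hence `w⁻¹ ∈ b⁻¹ W ⊆ J(W)`
  obtain ⟨w', hw', he⟩ := mem_mul_singleton_iff.1 (hb ▸ inv_mem_jacS hW hy)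
  have hw'' : b⁻¹ * w' = w⁻¹ := by
    rw [mul_inv_rev, mul_inv_rev, inv_inv, ← mul_assoc] at he
    rw [mul_right_cancel₀ (inv_ne_zero hb0) he, inv_mul_cancel_left₀ hb0]
  have hwJ := hw'' ▸ mul_mem_jacS (inv_mem_jacS_of_jacS_eq hb) hw'
  exact hwJ.2.resolve_left (inv_ne_zero hw0) (by rwa [inv_inv])

lemma normalizes_inv_of_jacS_eq (hW : IsTVR W) (hb0 : b ≠ 0) : Normalizes W b⁻¹ := by
  refine subset_antisymm ?_ ?_
  · rintro _ ⟨_, rfl, w, hw, rfl⟩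
    exact hb ▸ mul_mem_jacS (inv_mem_jacS_of_jacS_eq hb) hw
  · rintro _ ⟨w, hw, _, rfl, rfl⟩
    refine mem_singleton_mul_iff.2 ⟨_, conj_mem_of_jacS_eq hb hW hb0 hw, ?_⟩
    rw [mul_assoc, inv_mul_cancel_left₀ hb0]

lemma normalizes_of_jacS_eq (hW : IsTVR W) (hb0 : b ≠ 0) : Normalizes W b := by
  simpa using (normalizes_inv_of_jacS_eq hb hW hb0).inv (inv_ne_zero hb0)

end Radical

section Twist

-- `S (x a) = S (a e(x))`: modulo `S`, `a` carries `x` to `e(x)`. For `S = W`, `a = α_r`,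
-- `e = σ_r` this moves powers of `b` past `α_r`.
variable {S : Set K} {e : K ≃+* K} {a x y : K}

lemma mul_singleton_twist_mul (hx : Normalizes S x) (hxa : S * {x * a} = S * {a * e x})
    (hya : S * {y * a} = S * {a * e y}) : S * {x * y * a} = S * {a * e (x * y)} :=
  calc S * {x * y * a} = {x} * (S * {y * a}) := by
        rw [← mul_assoc, hx]; simp only [mul_assoc, Set.singleton_mul_singleton]
    _ = S * {x * a} * {e y} := by
        rw [hya, ← mul_assoc, hx]; simp only [mul_assoc, Set.singleton_mul_singleton]
    _ = S * {a * e (x * y)} := by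
        rw [hxa, map_mul]; simp only [mul_assoc, Set.singleton_mul_singleton]

lemma mul_singleton_twist_of_inv (hx : Normalizes S x) (hx0 : x ≠ 0) (ha0 : a ≠ 0)
    (h : S * {x⁻¹ * a} = S * {a * e x⁻¹}) : S * {x * a} = S * {a * e x} := by
  have hc0 : a * e x⁻¹ * a⁻¹ ≠ 0 := by simp [ha0, hx0]
  have h' : S * {x⁻¹} = S * {a * e x⁻¹ * a⁻¹} :=
    mul_singleton_cancel ha0 (by rwa [inv_mul_cancel_right₀ ha0])
  have hinv : (a * e x⁻¹ * a⁻¹)⁻¹ = a * e x * a⁻¹ := by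
    rw [mul_inv_rev, mul_inv_rev, inv_inv, map_inv₀, inv_inv, mul_assoc]
  rw [mul_singleton_mul, hx.mul_singleton_eq_inv hx0 hc0 h', hinv, ← mul_singleton_mul,
    inv_mul_cancel_right₀ ha0]

lemma mul_singleton_twist_zpow (hx : Normalizes S x) (hx0 : x ≠ 0) (ha0 : a ≠ 0)
    (h : S * {x⁻¹ * a} = S * {a * e x⁻¹}) (k : ℤ) : S * {x ^ k * a} = S * {a * e (x ^ k)} := by
  have hxa := mul_singleton_twist_of_inv hx hx0 ha0 h
  induction k using Int.induction_on with
  | zero => simp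
  | succ n ih => rw [zpow_add_one₀ hx0]; exact mul_singleton_twist_mul (hx.zpow hx0 n) ih hxa
  | pred n ih => rw [zpow_sub_one₀ hx0]; exact mul_singleton_twist_mul (hx.zpow hx0 _) ih h

variable {W : Subring K} {b : K}

lemma mul_singleton_inv_twist_of_jacS_eq (hb : jacS (W : Set K) = W * {b⁻¹}) (ha0 : a ≠ 0)
    (h : (W : Set K) * {a} = {a} * (e '' W)) :
    (W : Set K) * {b⁻¹ * a} = W * {a * e b⁻¹} :=
  calc (W : Set K) * {b⁻¹ * a} = {a} * e '' jacS W := by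
        rw [mul_singleton_mul, ← hb, jacS_mul_singleton ha0 h, image_jacS]
    _ = W * {a * e b⁻¹} := by
        rw [hb, Set.image_mul, Set.image_singleton, ← mul_assoc, ← h, mul_assoc,
          Set.singleton_mul_singleton]

lemma mul_singleton_zpow_twist_of_jacS_eq (hW : IsTVR W) (hb : jacS (W : Set K) = W * {b⁻¹})
    (hb0 : b ≠ 0) (ha0 : a ≠ 0) (h : (W : Set K) * {a} = {a} * (e '' W)) (k : ℤ) :
    (W : Set K) * {b ^ k * a} = W * {a * e (b ^ k)} :=
  mul_singleton_twist_zpow (normalizes_of_jacS_eq hb hW hb0) hb0 ha0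
    (mul_singleton_inv_twist_of_jacS_eq hb ha0 h) k

end Twist

section GradedExtension

variable {S T X : Set K} {x y : K}

lemma IsAddSubgrp.neg_mem (hS : IsAddSubgrp S) (hx : x ∈ S) : -x ∈ S := by
  simpa using hS.2 0 hS.1 x hx

lemma IsAddSubgrp.add_mem (hS : IsAddSubgrp S) (hx : x ∈ S) (hy : y ∈ S) : x + y ∈ S := by
  simpa using hS.2 x hx (-y) (hS.neg_mem hy)

def IsAddSubgrp.toAddSubgroup_s12 (hS : IsAddSubgrp S) : AddSubgroup K where
  carrier := S
  zero_mem' := hS.1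
  add_mem' := hS.add_mem
  neg_mem' := hS.neg_mem

lemma mul_mem_aprod (hx : x ∈ S) (hy : y ∈ T) : x * y ∈ aprod S T :=
  AddSubgroup.subset_closure (Set.mul_mem_mul hx hy)

lemma aprod_subset (hX : IsAddSubgrp X) (h : S * T ⊆ X) : aprod S T ⊆ X :=
  (AddSubgroup.closure_le hX.toAddSubgroup_s12).2 h

lemma aprod_subset_right (hT : IsAddSubgrp T) (h : S ⊆ Ol T) : aprod S T ⊆ T :=
  aprod_subset hT (Set.mul_subset_iff.2 fun _ hs _ ht => h hs _ ht)

lemma subset_aprod {W : Subring K} (h1 : (1 : K) ∈ (W : Set K)) : T ⊆ aprod W T := fun x hx => by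
  simpa using mul_mem_aprod h1 hx

lemma aprod_subset_mul_singleton {W : Subring K} (h : T ⊆ (W : Set K) * {y}) : aprod W T ⊆ W * {y} := by
  refine aprod_subset ⟨mem_mul_singleton_iff.2 ⟨0, W.zero_mem, zero_mul y⟩, ?_⟩ ?_
  · intro _ hx _ hz
    obtain ⟨u, hu, rfl⟩ := mem_mul_singleton_iff.1 hx
    obtain ⟨v, hv, rfl⟩ := mem_mul_singleton_iff.1 hz
    exact mem_mul_singleton_iff.2 ⟨u - v, W.sub_mem hu hv, sub_mul u v y⟩
  · rintro _ ⟨w, hw, t, ht, rfl⟩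
    obtain ⟨u, hu, rfl⟩ := mem_mul_singleton_iff.1 (h ht)
    exact mem_mul_singleton_iff.2 ⟨w * u, W.mul_mem hw hu, mul_assoc w u y⟩

def olSubring (hS : IsAddSubgrp S) : Subring K where
  carrier := Ol S
  zero_mem' _ _ := by simpa using hS.1
  one_mem' _ hx := by simpa using hx
  add_mem' ha hb z hz := by simpa [add_mul] using hS.add_mem (ha z hz) (hb z hz)
  neg_mem' ha z hz := by simpa using hS.neg_mem (ha z hz)
  mul_mem' ha hb z hz := by simpa [mul_assoc] using ha _ (hb z hz)

variable {V : Subring K} {σ : ℚ → K ≃+* K} {A : ℚ → Set K}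

lemma sigma_zero_apply (hσ : ∀ r s : ℚ, σ (r + s) = (σ r).trans (σ s)) (x : K) : σ 0 x = x :=
  (σ 0).injective (by simpa using (DFunLike.congr_fun (hσ 0 0) x).symm)

namespace IsGradedExtQ

variable (hA : IsGradedExtQ (V : Set K) σ A)
include hA

lemma isAddSubgrp (s : ℚ) : IsAddSubgrp (A s) := hA.1 s trivial

lemma zero_mem (s : ℚ) : (0 : K) ∈ A s := (hA.isAddSubgrp s).1

lemma mul_mem {r s : ℚ} (hx : x ∈ A r) (hy : y ∈ A s) : x * σ r y ∈ A (r + s) :=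
  hA.2.2.2 r trivial s trivial (mul_mem_aprod hx (Set.mem_image_of_mem _ hy))

lemma mul_mem_neg {s : ℚ} (hx : x ∈ A s) (hy : y ∈ A (-s)) : x * σ s y ∈ (V : Set K) := by
  simpa [hA.2.1] using hA.mul_mem hx hy

lemma exists_eq_inv_of_not_mem {s : ℚ} (hx : x ∉ A s) : ∃ c ∈ A (-s), c ≠ 0 ∧ σ s c = x⁻¹ := by
  have : x ∈ A s ∪ σ s '' invS (A (-s)) := hA.2.2.1 s trivial ▸ Set.mem_univ x
  obtain ⟨_, ⟨c, hc, hc0, rfl⟩, rfl⟩ := this.resolve_left hx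
  exact ⟨c, hc, hc0, by rw [map_inv₀, inv_inv]⟩

lemma subset_Ol (hσ0 : ∀ x, σ 0 x = x) (s : ℚ) : (V : Set K) ⊆ Ol (A s) := fun v hv x hx => by
  simpa [hσ0] using hA.mul_mem (hA.2.1 ▸ hv : v ∈ A 0) hx

lemma inv_mem_of_not_mem_Ol {s : ℚ} {k : K} (hk : k ∉ Ol (A s)) : k⁻¹ ∈ (V : Set K) := by
  obtain ⟨x, hx, hkx⟩ : ∃ x ∈ A s, k * x ∉ A s := by simpa [Ol] using hk
  have hx0 : x ≠ 0 := by rintro rfl; exact hkx (by simpa using hA.zero_mem s)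
  obtain ⟨c, hc, -, hce⟩ := hA.exists_eq_inv_of_not_mem hkx
  have : x * σ s c = k⁻¹ := by rw [hce, mul_inv_rev, mul_inv_cancel_left₀ hx0]
  exact this ▸ hA.mul_mem_neg hx hc

lemma Ol_total (hσ0 : ∀ x, σ 0 x = x) (s t : ℚ) :
    Ol (A s) ⊆ Ol (A t) ∨ Ol (A t) ⊆ Ol (A s) := by
  set Ws := olSubring (hA.isAddSubgrp s)
  set Wt := olSubring (hA.isAddSubgrp t)
  by_contra! h
  obtain ⟨⟨x, hxs, hxt⟩, ⟨y, hyt, hys⟩⟩ := And.imp Set.not_subset.1 Set.not_subset.1 h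
  have hy0 : y ≠ 0 := by rintro rfl; exact hys (Ws.zero_mem)
  by_cases hyx : y⁻¹ * x ∈ Wt
  · exact hxt (show x ∈ Wt by
      simpa [mul_inv_cancel_left₀ hy0] using Wt.mul_mem (show y ∈ Wt from hyt) hyx)
  · -- otherwise `(y⁻¹ x)⁻¹ = x⁻¹ y` lies in `V ⊆ O_l(A_s)`, which puts `y` in `O_l(A_s)`
    have hxy : x⁻¹ * y ∈ Ws :=
      show x⁻¹ * y ∈ Ol (A s) by simpa using hA.subset_Ol hσ0 s (hA.inv_mem_of_not_mem_Ol hyx)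
    have hx0 : x ≠ 0 := by rintro rfl; exact hxt (Wt.zero_mem)
    exact hys (show y ∈ Ws by
      simpa [mul_inv_cancel_left₀ hx0] using Ws.mul_mem (show x ∈ Ws from hxs) hxy)

lemma exists_subring_eq_iUnion_Ol (hσ0 : ∀ x, σ 0 x = x) :
    ∃ W : Subring K, (W : Set K) = ⋃ s, Ol (A s) ∧ IsTVR W ∧ V ≤ W := by
  let Ws := fun s => olSubring (hA.isAddSubgrp s)
  have hdir : Directed (· ≤ ·) Ws := fun s t =>
    (hA.Ol_total hσ0 s t).elim (fun h => ⟨t, h, le_rfl⟩) (fun h => ⟨s, le_rfl, h⟩)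
  have hV : V ≤ ⨆ s, Ws s := fun v hv => le_iSup Ws 0 (hA.subset_Ol hσ0 0 hv)
  refine ⟨⨆ s, Ws s, Subring.coe_iSup_of_directed hdir, fun k _ => ?_, hV⟩
  by_cases hk : k ∈ Ws 0
  · exact Or.inl (le_iSup Ws 0 hk)
  · exact Or.inr (hV (hA.inv_mem_of_not_mem_Ol hk))

end IsGradedExtQ

end GradedExtension

lemma IsGradedMap.add_neg_nonpos {f : ℚ → ℤ} (hf : IsGradedMap f) (s : ℚ) : f s + f (-s) ≤ 0 := by
  simpa [hf.1] using hf.2.1 s (-s)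

section Generators

variable {V W : Subring K} {σ : ℚ → K ≃+* K} {A : ℚ → Set K} {b : K} {f : ℚ → ℤ} {α : ℚ → K}

variable (hW : IsTVR W) (hb : jacS (W : Set K) = W * {b⁻¹}) (hb0 : b ≠ 0)
  (h2 : ∀ r, (W : Set K) * {α r} = {α r} * (σ r '' W))
  (h3 : ∀ r s, (W : Set K) * {α r * σ r (α s)} = W * {α (r + s)}) (hα0 : α 0 = 1)
  (hA : IsGradedExtQ (V : Set K) σ A) (h1 : ∀ r, aprod W (A r) = W * {b ^ f r * α r})

include h3 hα0 in
lemma alpha_ne_zero (s : ℚ) : α s ≠ 0 := by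
  intro h0
  have : (1 : K) ∈ (W : Set K) * {α s * σ s (α (-s))} := by
    rw [h3, add_neg_cancel, hα0]
    exact mem_mul_singleton_iff.2 ⟨1, W.one_mem, mul_one 1⟩
  obtain ⟨w, -, hw⟩ := mem_mul_singleton_iff.1 this
  simp [h0] at hw

include hW hb hb0 h2 in
lemma singleton_zpow_mul_image (m : ℤ) (s : ℚ) :
    {b ^ m * α s} * σ s '' W = W * {b ^ m * α s} := by
  rw [← ((normalizes_of_jacS_eq hb hW hb0).zpow hb0 m).singleton_mul_mul_singleton, h2,
    ← mul_assoc, Set.singleton_mul_singleton]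

include hW hb hb0 h2 h3 hα0 in
lemma mul_singleton_mul_sigma (m n : ℤ) (r s : ℚ) :
    (W : Set K) * {b ^ m * α r * σ r (b ^ n * α s)} = W * {b ^ (m + n) * α (r + s)} := by
  have hN := fun k : ℤ => (normalizes_of_jacS_eq hb hW hb0).zpow hb0 k
  calc (W : Set K) * {b ^ m * α r * σ r (b ^ n * α s)}
        = {b ^ m} * (W * {α r * σ r (b ^ n)}) * {σ r (α s)} := by
          rw [(hN m).singleton_mul_mul_singleton, ← mul_singleton_mul, map_mul]
          simp only [mul_assoc]
      _ = W * {b ^ (m + n) * (α r * σ r (α s))} := by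
          rw [← mul_singleton_zpow_twist_of_jacS_eq hW hb hb0 (alpha_ne_zero h3 hα0 r) (h2 r),
            (hN m).singleton_mul_mul_singleton, ← mul_singleton_mul, zpow_add₀ hb0]
          simp only [mul_assoc]
      _ = W * {b ^ (m + n) * α (r + s)} := by
          rw [← (hN _).singleton_mul_mul_singleton, h3, (hN _).singleton_mul_mul_singleton]

include hW hb hb0 h2 h3 hα0 in
lemma mul_sigma_mem_mul_singleton_iff (m : ℤ) (s : ℚ) {x y : K} :
    b ^ m * α s * σ s x ∈ (W : Set K) * {b ^ m * α s * σ s y} ↔ x ∈ (W : Set K) * {y} :=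
  mul_mem_singleton_mul_iff (mul_ne_zero (zpow_ne_zero m hb0) (alpha_ne_zero h3 hα0 s))
    (singleton_zpow_mul_image hW hb hb0 h2 m s)

include hW hb hb0 h2 h3 hα0 hA h1 in
lemma inv_mem_of_mul_not_mem {s : ℚ} {w : K} (hw : w * (b ^ f s * α s) ∉ A s) :
    w⁻¹ ∈ (W : Set K) * {b ^ (f s + f (-s))} := by
  obtain ⟨c, hc, -, hce⟩ := hA.exists_eq_inv_of_not_mem hw
  have hβ0 : b ^ f s * α s ≠ 0 := mul_ne_zero (zpow_ne_zero _ hb0) (alpha_ne_zero h3 hα0 s)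
  have := (mul_sigma_mem_mul_singleton_iff hW hb hb0 h2 h3 hα0 (f s) s).2
    (h1 (-s) ▸ subset_aprod W.one_mem hc)
  rwa [mul_singleton_mul_sigma hW hb hb0 h2 h3 hα0, add_neg_cancel, hα0, mul_one, hce,
    mul_inv_rev, mul_inv_cancel_left₀ hβ0] at this

include hb hb0 h3 hα0 h1 in
lemma not_subset_mul_singleton_zpow_sub_one (s : ℚ) :
    ¬ A s ⊆ (W : Set K) * {b ^ (f s - 1) * α s} := by
  intro h
  have hβ : b ^ f s * α s ∈ (W : Set K) * {b ^ (f s - 1) * α s} :=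
    aprod_subset_mul_singleton h (h1 s ▸ mem_mul_singleton_iff.2 ⟨1, W.one_mem, one_mul _⟩)
  obtain ⟨w, hw, he⟩ := mem_mul_singleton_iff.1 hβ
  have hβ : b ^ f s * α s = b * (b ^ (f s - 1) * α s) := by
    rw [← mul_assoc, ← zpow_one_add₀ hb0, add_sub_cancel]
  have hwb : w = b :=
    mul_right_cancel₀ (mul_ne_zero (zpow_ne_zero _ hb0) (alpha_ne_zero h3 hα0 s)) (he.trans hβ)
  exact not_mem_of_jacS_eq hb hb0 (hwb ▸ hw)

include hW hb hb0 h2 h3 hα0 hA h1 in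
lemma mul_singleton_zpow_sub_one_subset {s : ℚ} (hε : f s + f (-s) ≤ 0) :
    (W : Set K) * {b ^ (f s - 1) * α s} ⊆ A s := by
  intro _ hx
  obtain ⟨w, hw, rfl⟩ := mem_mul_singleton_iff.1 hx
  by_contra hwA
  have hw0 : w ≠ 0 := by rintro rfl; exact hwA (by simpa using hA.zero_mem s)
  rw [sub_eq_neg_add, zpow_add₀ hb0, zpow_neg_one, mul_assoc, ← mul_assoc w] at hwA
  obtain ⟨w', hw', he⟩ := mem_mul_singleton_iff.1
    (inv_mem_of_mul_not_mem hW hb hb0 h2 h3 hα0 hA h1 hwA)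
  have hbw : b = w' * b ^ (f s + f (-s)) * w := by
    rw [he, mul_inv_rev, inv_inv, inv_mul_cancel_right₀ hw0]
  exact not_mem_of_jacS_eq hb hb0
    (hbw ▸ W.mul_mem (W.mul_mem hw' (zpow_mem_of_nonpos hb hε)) hw)

include hW hb hb0 h2 h3 hα0 hA h1 in
lemma not_mul_singleton_subset (hVW : V ≤ W) (hne : (V : Set K) ≠ W) {s : ℚ}
    (hε : f s + f (-s) = 0) :
    ¬ (W : Set K) * {b ^ f s * α s} ⊆ A s := by
  intro hsub
  obtain ⟨a, ha, haJ⟩ :=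
    Set.not_subset.1 (not_subset_mul_singleton_zpow_sub_one hb hb0 h3 hα0 h1 (-s))
  have huV : b ^ f s * α s * σ s a ∈ V :=
    hA.mul_mem_neg (hsub (mem_mul_singleton_iff.2 ⟨1, W.one_mem, one_mul _⟩)) ha
  have hJ : jacS (W : Set K) = W * {b ^ f s * α s * σ s (b ^ (f (-s) - 1) * α (-s))} := by
    rw [mul_singleton_mul_sigma hW hb hb0 h2 h3 hα0, add_neg_cancel, hα0, mul_one,
      show f s + (f (-s) - 1) = -1 by omega, zpow_neg_one, hb]
  have huJ : b ^ f s * α s * σ s a ∉ jacS (W : Set K) := by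
    rwa [hJ, mul_sigma_mem_mul_singleton_iff hW hb hb0 h2 h3 hα0]
  obtain ⟨hu0, hui⟩ := inv_mem_of_not_mem_jacS (hVW huV) huJ
  refine hne (Set.Subset.antisymm hVW fun w hw => ?_)
  have := hA.mul_mem_neg
    (hsub (mem_mul_singleton_iff.2 ⟨w * (b ^ f s * α s * σ s a)⁻¹, W.mul_mem hw hui, rfl⟩)) ha
  rwa [mul_assoc (w * _), inv_mul_cancel_right₀ hu0] at this

include hW hb hb0 h2 h3 hα0 hA h1 in
lemma add_neg_eq_zero_of_mul_not_mem (hf : IsGradedMap f) {s : ℚ} {w : K} (hw : w ∈ W)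
    (hwA : w * (b ^ f s * α s) ∉ A s) : f s + f (-s) = 0 := by
  have hw0 : w ≠ 0 := by rintro rfl; exact hwA (by simpa using hA.zero_mem s)
  have hwinv := inv_mem_of_mul_not_mem hW hb hb0 h2 h3 hα0 hA h1 hwA
  by_contra hε
  rw [show f s + f (-s) = -1 by have := hf.add_neg_nonpos s; have := hf.2.2 s; omega,
    zpow_neg_one, ← hb] at hwinv
  exact hwinv.2.resolve_left (inv_ne_zero hw0) (by rwa [inv_inv])

include hA h1 in
lemma mul_singleton_subset_of_eq (hσ0 : ∀ x, σ 0 x = x) (hVW : (V : Set K) = W) (s : ℚ) :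
    (W : Set K) * {b ^ f s * α s} ⊆ A s :=
  h1 s ▸ aprod_subset_right (hA.isAddSubgrp s) (hVW ▸ hA.subset_Ol hσ0 s)

include hW hb hb0 h2 h3 hα0 hA h1 in
lemma ssubset_iff_of_jacS_eq (hσ0 : ∀ x, σ 0 x = x) (hVW : V ≤ W) (hf : IsGradedMap f)
    (r : ℚ) :
    ((W : Set K) * {b ^ (f r - 1) * α r} ⊂ A r ∧ A r ⊂ W * {b ^ f r * α r}) ↔
      ((V : Set K) ≠ W ∧ f r + f (-r) = 0) := by
  refine ⟨fun ⟨_, hup⟩ => ?_, fun ⟨hne, hε⟩ => ⟨⟨?_, ?_⟩, ⟨?_, ?_⟩⟩⟩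
  · obtain ⟨x, hx, hxA⟩ := Set.exists_of_ssubset hup
    obtain ⟨w, hw, rfl⟩ := mem_mul_singleton_iff.1 hx
    exact ⟨fun hV => hxA (mul_singleton_subset_of_eq hA h1 hσ0 hV r hx),
      add_neg_eq_zero_of_mul_not_mem hW hb hb0 h2 h3 hα0 hA h1 hf hw hxA⟩
  · exact mul_singleton_zpow_sub_one_subset hW hb hb0 h2 h3 hα0 hA h1 hε.le
  · exact not_subset_mul_singleton_zpow_sub_one hb hb0 h3 hα0 h1 r
  · exact h1 r ▸ subset_aprod W.one_mem
  · exact not_mul_singleton_subset hW hb hb0 h2 h3 hα0 hA h1 hVW hne hε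

end Generators

section Degenerate

variable {V : Subring K} {σ : ℚ → K ≃+* K} {A : ℚ → Set K} {f : ℚ → ℤ} {α : ℚ → K}

lemma univ_mul_singleton {x : K} (hx : x ≠ 0) : (Set.univ : Set K) * {x} = Set.univ :=
  Set.eq_univ_of_forall fun y =>
    mem_mul_singleton_iff.2 ⟨y * x⁻¹, Set.mem_univ _, inv_mul_cancel_right₀ hx y⟩

lemma univ_mul_singleton_zero : (Set.univ : Set K) * {0} = {0} := by
  rw [Set.mul_singleton]; simp

-- With `b = 0`, `b ^ k` is `1` for `k = 0` and `0` otherwise.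
variable (hA : IsGradedExtQ (V : Set K) σ A) (hα : ∀ s, α s ≠ 0)
  (h1 : ∀ r, aprod Set.univ (A r) = Set.univ * {(0 : K) ^ f r * α r})

include hA hα h1 in
lemma eq_zero_iff_of_aprod_univ (s : ℚ) : A s = {0} ↔ f s ≠ 0 := by
  constructor
  · intro hs hf
    have : aprod Set.univ (A s) ⊆ {0} :=
      aprod_subset ⟨rfl, by simp⟩ (by rw [hs, Set.mul_singleton]; simp)
    rw [h1, hf, zpow_zero, one_mul, univ_mul_singleton (hα s)] at this
    exact one_ne_zero (this (Set.mem_univ 1))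
  · intro hf
    refine subset_antisymm ?_ (Set.singleton_subset_iff.2 (hA.zero_mem s))
    rw [← univ_mul_singleton_zero, ← zero_mul (α s), ← zero_zpow _ hf, ← h1]
    exact fun x hx => by simpa using mul_mem_aprod (Set.mem_univ 1) hx

include hA in
lemma eq_univ_of_neg_eq_zero {s : ℚ} (h : A (-s) = {0}) : A s = Set.univ := by
  have hinv : invS (A (-s)) = ∅ := by
    rw [h]; ext; simp [invS]
  simpa [hinv] using hA.2.2.1 s trivial

include hA in
lemma neg_eq_zero_of_eq_univ (hVK : (V : Set K) ≠ Set.univ) {s : ℚ} (h : A s = Set.univ) :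
    A (-s) = {0} := by
  refine subset_antisymm (fun a ha => ?_) (Set.singleton_subset_iff.2 (hA.zero_mem _))
  by_contra ha0
  have hσa : σ s a ≠ 0 := by simpa using ha0
  refine hVK (Set.eq_univ_of_forall fun v => ?_)
  have := hA.mul_mem_neg (h ▸ Set.mem_univ (v * (σ s a)⁻¹) : v * (σ s a)⁻¹ ∈ A s) ha
  rwa [inv_mul_cancel_right₀ hσa] at this

include hA hα h1 in
lemma ssubset_iff_of_aprod_univ (hVK : (V : Set K) ≠ Set.univ) (r : ℚ) :
    (Set.univ * {(0 : K) ^ (f r - 1) * α r} ⊂ A r ∧ A r ⊂ Set.univ * {(0 : K) ^ f r * α r}) ↔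
      f r + f (-r) = 0 := by
  have hzero := eq_zero_iff_of_aprod_univ hA hα h1
  by_cases hr : f r = 0
  · have hlow : (Set.univ : Set K) * {(0 : K) ^ (f r - 1) * α r} = {0} := by
      rw [hr, zero_sub, zero_zpow _ (by norm_num), zero_mul, univ_mul_singleton_zero]
    have hup : (Set.univ : Set K) * {(0 : K) ^ f r * α r} = Set.univ := by
      rw [hr, zpow_zero, one_mul, univ_mul_singleton (hα r)]
    rw [hlow, hup, hr, zero_add, Set.ssubset_univ_iff, Set.ssubset_iff_subset_ne]
    constructor
    · rintro ⟨-, hu⟩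
      by_contra h
      exact hu (eq_univ_of_neg_eq_zero hA ((hzero (-r)).2 h))
    · intro h
      refine ⟨⟨Set.singleton_subset_iff.2 (hA.zero_mem r), fun h0 => (hzero r).1 h0.symm hr⟩,
        fun hu => (hzero (-r)).1 (neg_eq_zero_of_eq_univ hA hVK hu) h⟩
  · have hAr : A r = {0} := (hzero r).2 hr
    have hneg : f (-r) = 0 := by
      by_contra hneg
      have := eq_univ_of_neg_eq_zero hA ((hzero (-r)).2 hneg)
      rw [hAr] at this
      exact one_ne_zero (Set.eq_univ_iff_forall.1 this 1)
    rw [hneg, add_zero, zero_zpow _ hr, zero_mul, univ_mul_singleton_zero, hAr]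
    exact iff_of_false (fun h => h.2.ne rfl) hr

end Degenerate

theorem stmt12_general (V : Subring K) (hVK : (V : Set K) ≠ Set.univ)
    (σ : ℚ → (K ≃+* K)) (hσ : ∀ r s : ℚ, σ (r + s) = (σ r).trans (σ s))
    (A : ℚ → Set K) (hA : IsGradedExtQ (V : Set K) σ A)
    (W : Set K) (hW : W = ⋃ s : ℚ, Ol (A s))
    (b : K) (hb : jacS W = W * {b⁻¹})
    (f : ℚ → ℤ) (hf : IsGradedMap f)
    (α : ℚ → K) (hα0 : α 0 = 1)
    (h1 : ∀ r : ℚ, aprod W (A r) = W * {b ^ f r * α r})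
    (h2 : ∀ r : ℚ, W * {α r} = {α r} * (σ r '' W))
    (h3 : ∀ r s : ℚ, W * {α r * σ r (α s)} = W * {α (r + s)}) :
    ∀ r : ℚ, r ≠ 0 →
      ((W * {b ^ (f r - 1) * α r} ⊂ A r ∧ A r ⊂ W * {b ^ f r * α r}) ↔
        ((V : Set K) ≠ W ∧ f r + f (-r) = 0)) := by
  have hσ0 := sigma_zero_apply hσ
  obtain ⟨W', hW', hWT, hVW⟩ := hA.exists_subring_eq_iUnion_Ol hσ0
  obtain rfl : W = W' := hW.trans hW'.symm
  have hα := alpha_ne_zero h3 hα0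
  intro r _
  by_cases hb0 : b = 0
  · subst hb0
    have hWuniv := eq_univ_of_jacS_eq_zero hWT (by rw [hb, inv_zero, Set.mul_singleton]; simp)
    rw [hWuniv] at h1 ⊢
    rw [ssubset_iff_of_aprod_univ hA hα h1 hVK r, and_iff_right hVK]
  exact ssubset_iff_of_jacS_eq hWT hb hb0 h2 h3 hα0 hA h1 hσ0 hVW hf r

/-- Under the data of Lemma 4.11: for `r ≠ 0`, `Wb^{f(r)-1}α_r ⊊ A_r ⊊ Wb^{f(r)}α_r` iff
`W ≠ V` and `f(r) + f(-r) = 0`. -/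
theorem stmt12 (V : Subring K) (hV : IsTVR V) (hVK : (V : Set K) ≠ Set.univ)
    (σ : ℚ → (K ≃+* K)) (hσ : ∀ r s : ℚ, σ (r + s) = (σ r).trans (σ s))
    (A : ℚ → Set K) (hA : IsGradedExtQ (V : Set K) σ A)
    (W : Set K) (hW : W = ⋃ s : ℚ, Ol (A s))
    (hII : ∃ r : ℚ, 0 < r ∧ ¬ HrTypeI σ A r)
    (t : ℚ) (ht : Ol (A t) = W)
    (b : K) (hb : jacS W = W * {b⁻¹})
    (f : ℚ → ℤ) (hf : IsGradedMap f) (hfne : ∃ s : ℚ, f s ≠ 0)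
    (α : ℚ → K) (hα0 : α 0 = 1)
    (h1 : ∀ r : ℚ, aprod W (A r) = W * {b ^ f r * α r})
    (h2 : ∀ r : ℚ, W * {α r} = {α r} * (σ r '' W))
    (h3 : ∀ r s : ℚ, W * {α r * σ r (α s)} = W * {α (r + s)}) :
    ∀ r : ℚ, r ≠ 0 →
      ((W * {b ^ (f r - 1) * α r} ⊂ A r ∧ A r ⊂ W * {b ^ f r * α r}) ↔
        ((V : Set K) ≠ W ∧ f r + f (-r) = 0)) :=
  stmt12_general V hVK σ hσ A hA W hW b hb f hf α hα0 h1 h2 h3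
end
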